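/- arXiv:2302.14265 — 5 statements merged into one kernel-verified Lean document; each statement's English description precedes it below -/
import Mathlib

section
/- For every continuous function β : [0,1] → ℝ there exists a unique continuous function k : [0,1] → ℝ satisfying the backstepping kernel equation k(x) = −β(x) + ∫₀ˣ β(x−y) k(y) dy for all x ∈ [0,1]. -/
open MeasureTheory

section BacksteppingAuxSection
open Set intervalIntegral

namespace BacksteppingAux

noncomputable section

abbrev X := C(Set.Icc (0:ℝ) 1, ℝ)

noncomputable def ext (k : X) : ℝ → ℝ := Set.IccExtend zero_le_one k

lemma ext_cont (k : X) : Continuous (ext k) := k.continuous.Icc_extend'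

lemma ext_of_mem (k : X) {y : ℝ} (hy : y ∈ Set.Icc (0:ℝ) 1) :
    ext k y = k ⟨y, hy⟩ := Set.IccExtend_of_mem _ _ hy

lemma ext_dist (k k' : X) (y : ℝ) : |ext k y - ext k' y| ≤ dist k k' := by
  rw [← Real.dist_eq]
  exact ContinuousMap.dist_apply_le_dist _

variable (B : ℝ → ℝ)

/-- The Volterra operator. -/
noncomputable def T (hB : Continuous B) (k : X) : X :=
  ⟨fun x => -B x + ∫ y in (0:ℝ)..(x:ℝ), B ((x:ℝ) - y) * ext k y, by
    have h1 : Continuous fun x : ℝ => -B x + ∫ y in (0:ℝ)..x, B (x - y) * ext k y := by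
      refine (hB.neg).add ?_
      exact continuous_parametric_intervalIntegral_of_continuous
        (f := fun x y => B (x - y) * ext k y) (μ := volume)
        (by
          have := ext_cont k
          fun_prop) continuous_id
    exact h1.comp continuous_subtype_val⟩

lemma T_apply (hB : Continuous B) (k : X) (x : Set.Icc (0:ℝ) 1) :
    T B hB k x = -B x + ∫ y in (0:ℝ)..(x:ℝ), B ((x:ℝ) - y) * ext k y := rfl

lemma iterate_bound (hB : Continuous B) (M : ℝ) (hM : ∀ x, |B x| ≤ M)
    (k k' : X) : ∀ (n : ℕ) (x : Set.Icc (0:ℝ) 1),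
    |(T B hB)^[n] k x - (T B hB)^[n] k' x| ≤
      M ^ n * (x:ℝ) ^ n / n.factorial * dist k k' := by
  have hM0 : 0 ≤ M := le_trans (abs_nonneg _) (hM 0)
  have hd0 : 0 ≤ dist k k' := dist_nonneg
  intro n
  induction n with
  | zero =>
    intro x
    simpa [Real.dist_eq] using ContinuousMap.dist_apply_le_dist (f := k) (g := k') x
  | succ n ih =>
    intro x
    obtain ⟨hx0, hx1⟩ := x.2
    set f := (T B hB)^[n] k with hf
    set f' := (T B hB)^[n] k' with hf'
    rw [Function.iterate_succ_apply', Function.iterate_succ_apply', T_apply, T_apply]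
    have hint : ∀ g : X, IntervalIntegrable (fun y => B ((x:ℝ) - y) * ext g y)
        volume 0 (x:ℝ) := by
      intro g
      exact ((hB.comp (continuous_const.sub continuous_id)).mul (ext_cont g)).intervalIntegrable _ _
    have key : (-B x + ∫ y in (0:ℝ)..(x:ℝ), B ((x:ℝ) - y) * ext f y)
        - (-B x + ∫ y in (0:ℝ)..(x:ℝ), B ((x:ℝ) - y) * ext f' y)
        = ∫ y in (0:ℝ)..(x:ℝ), (B ((x:ℝ) - y) * ext f y - B ((x:ℝ) - y) * ext f' y) := by
      rw [intervalIntegral.integral_sub (hint f) (hint f')]; ring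
    rw [key]
    have hbound : ∀ᵐ y ∂(volume.restrict (Set.uIoc (0:ℝ) (x:ℝ))),
        ‖B ((x:ℝ) - y) * ext f y - B ((x:ℝ) - y) * ext f' y‖ ≤
          (M ^ (n+1) / n.factorial * dist k k') * y ^ n := by
      refine (ae_restrict_mem measurableSet_uIoc).mono fun y hy => ?_
      rw [Set.uIoc_of_le hx0] at hy
      have hy1 : y ∈ Set.Icc (0:ℝ) 1 := ⟨hy.1.le, hy.2.trans hx1⟩
      rw [ext_of_mem _ hy1, ext_of_mem _ hy1, ← mul_sub]
      rw [Real.norm_eq_abs, abs_mul]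
      calc |B ((x:ℝ) - y)| * |f ⟨y, hy1⟩ - f' ⟨y, hy1⟩|
          ≤ M * (M ^ n * y ^ n / n.factorial * dist k k') := by
            refine mul_le_mul (hM _) ?_ (abs_nonneg _) hM0
            simpa using ih ⟨y, hy1⟩
        _ = (M ^ (n+1) / n.factorial * dist k k') * y ^ n := by ring
    have hg : IntervalIntegrable
        (fun y => (M ^ (n+1) / n.factorial * dist k k') * y ^ n) volume 0 (x:ℝ) :=
      (continuous_const.mul (continuous_pow n)).intervalIntegrable _ _
    calc |∫ y in (0:ℝ)..(x:ℝ), (B ((x:ℝ) - y) * ext f y - B ((x:ℝ) - y) * ext f' y)|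
        ≤ |∫ y in (0:ℝ)..(x:ℝ), (M ^ (n+1) / n.factorial * dist k k') * y ^ n| :=
          intervalIntegral.norm_integral_le_abs_of_norm_le hbound hg
      _ = M ^ (n+1) * (x:ℝ) ^ (n+1) / (n+1).factorial * dist k k' := by
          rw [intervalIntegral.integral_const_mul, integral_pow]
          rw [abs_of_nonneg]
          · rw [Nat.factorial_succ]
            push_cast
            field_simp
            ring
          · have h1 : 0 ≤ (x:ℝ) ^ (n+1) := pow_nonneg hx0 _
            have h2 : (0:ℝ) ≤ M ^ (n+1) / n.factorial * dist k k' := by positivity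
            have h3 : (0:ℝ) ≤ ((x:ℝ) ^ (n+1) - 0 ^ (n+1)) / (n+1) := by
              rw [zero_pow (Nat.succ_ne_zero n), sub_zero]
              exact div_nonneg h1 (by positivity)
            exact mul_nonneg h2 h3

lemma lipschitz_iterate (hB : Continuous B) (M : ℝ) (hM : ∀ x, |B x| ≤ M) (n : ℕ)
    (k k' : X) : dist ((T B hB)^[n] k) ((T B hB)^[n] k') ≤
      M ^ n / n.factorial * dist k k' := by
  have hM0 : 0 ≤ M := le_trans (abs_nonneg _) (hM 0)
  have hC : 0 ≤ M ^ n / n.factorial * dist k k' := by positivity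
  rw [ContinuousMap.dist_le hC]
  intro x
  rw [Real.dist_eq]
  refine le_trans (iterate_bound B hB M hM k k' n x) ?_
  have hx : (x:ℝ) ^ n ≤ 1 := pow_le_one₀ x.2.1 x.2.2
  have : M ^ n * (x:ℝ) ^ n ≤ M ^ n * 1 := by
    exact mul_le_mul_of_nonneg_left (by simpa using hx) (pow_nonneg hM0 _)
  calc M ^ n * (x:ℝ) ^ n / n.factorial * dist k k'
      ≤ M ^ n * 1 / n.factorial * dist k k' := by
        refine mul_le_mul_of_nonneg_right ?_ dist_nonneg
        have hfac : (0:ℝ) < n.factorial := by positivity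
        gcongr
    _ = M ^ n / n.factorial * dist k k' := by ring

end

end BacksteppingAux


end BacksteppingAuxSection

open BacksteppingAux Filter

/-- For every continuous function β : [0,1] → ℝ there exists a unique
continuous function k : [0,1] → ℝ satisfying the backstepping kernel equation
k(x) = −β(x) + ∫₀ˣ β(x−y) k(y) dy for all x ∈ [0,1]. -/
theorem backstepping_kernel_exists_unique (β : ℝ → ℝ)
    (hβ : ContinuousOn β (Set.Icc 0 1)) :
    ∃ k : ℝ → ℝ,
      (ContinuousOn k (Set.Icc 0 1) ∧
        ∀ x ∈ Set.Icc (0:ℝ) 1,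
          k x = -β x + ∫ y in (0:ℝ)..x, β (x - y) * k y) ∧
      ∀ k' : ℝ → ℝ,
        (ContinuousOn k' (Set.Icc 0 1) ∧
          ∀ x ∈ Set.Icc (0:ℝ) 1,
            k' x = -β x + ∫ y in (0:ℝ)..x, β (x - y) * k' y) →
        Set.EqOn k' k (Set.Icc 0 1) := by
  classical
  set βc : X := ⟨fun x => β x, hβ.restrict⟩ with hβc
  set B : ℝ → ℝ := ext βc with hBdef
  have hB : Continuous B := ext_cont βc
  have hBeq : ∀ x ∈ Set.Icc (0:ℝ) 1, B x = β x := fun x hx => by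
    rw [hBdef, ext_of_mem βc hx]; rfl
  set M := ‖βc‖ with hMdef
  have hM : ∀ x, |B x| ≤ M := fun x => by
    rw [hBdef]
    show |βc (Set.projIcc 0 1 zero_le_one x)| ≤ M
    rw [← Real.norm_eq_abs]
    exact βc.norm_coe_le_norm _
  -- pick n with M^n/n! < 1
  have htend : Tendsto (fun n : ℕ => M ^ n / n.factorial) atTop (nhds 0) :=
    FloorSemiring.tendsto_pow_div_factorial_atTop M
  obtain ⟨n, hn⟩ := (htend.eventually_lt_const one_pos).exists
  have hM0 : 0 ≤ M := le_trans (abs_nonneg _) (hM 0)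
  have hKnn : 0 ≤ M ^ n / n.factorial := by positivity
  set K : NNReal := ⟨M ^ n / n.factorial, hKnn⟩ with hK
  have hLip : LipschitzWith K ((T B hB)^[n]) :=
    LipschitzWith.of_dist_le_mul fun k k' => lipschitz_iterate B hB M hM n k k'
  have hC : ContractingWith K ((T B hB)^[n]) := ⟨by exact_mod_cast hn, hLip⟩
  set k0 : X := hC.fixedPoint ((T B hB)^[n]) with hk0
  have hfix : Function.IsFixedPt (T B hB) k0 := hC.isFixedPt_fixedPoint_iterate
  have hsol : ∀ (g : X), ∀ x (hx : x ∈ Set.Icc (0:ℝ) 1),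
      (T B hB g : Set.Icc (0:ℝ) 1 → ℝ) ⟨x, hx⟩ =
        -β x + ∫ y in (0:ℝ)..x, β (x - y) * ext g y := by
    intro g x hx
    rw [T_apply]
    congr 1
    · rw [hBeq x hx]
    · refine intervalIntegral.integral_congr fun y hy => ?_
      rw [Set.uIcc_of_le hx.1] at hy
      have hxy : x - y ∈ Set.Icc (0:ℝ) 1 :=
        ⟨by linarith [hy.2], by linarith [hy.1, hx.2]⟩
      rw [hBeq _ hxy]
  refine ⟨ext k0, ⟨(ext_cont k0).continuousOn, ?_⟩, ?_⟩
  · intro x hx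
    have h1 : ext k0 x = k0 ⟨x, hx⟩ := ext_of_mem _ hx
    rw [h1]
    conv_lhs => rw [← hfix]
    exact hsol k0 x hx
  · rintro k' ⟨hk'c, hk'⟩
    set g : X := ⟨fun x => k' x, hk'c.restrict⟩ with hg
    have hgfix : Function.IsFixedPt (T B hB) g := by
      apply ContinuousMap.ext
      rintro ⟨x, hx⟩
      have hext : ∀ y ∈ Set.Icc (0:ℝ) 1, ext g y = k' y := fun y hy => ext_of_mem g hy
      rw [hsol g x hx]
      have : (∫ y in (0:ℝ)..x, β (x - y) * ext g y) = ∫ y in (0:ℝ)..x, β (x - y) * k' y := by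
        refine intervalIntegral.integral_congr fun y hy => ?_
        rw [Set.uIcc_of_le hx.1] at hy
        rw [hext y ⟨hy.1, hy.2.trans hx.2⟩]
      rw [this, ← hk' x hx]
      rfl
    have : g = k0 := hC.fixedPoint_unique (hgfix.iterate n)
    intro x hx
    have h1 : ext k0 x = k0 ⟨x, hx⟩ := ext_of_mem _ hx
    rw [h1, ← this]
    rfl
end

section
/- (Lipschitzness of the backstepping kernel operator.) Let B > 0 and let β₁, β₂ : [0,1] → ℝ be continuous functions with ‖β₁‖_∞ ≤ B and ‖β₂‖_∞ ≤ B. Let k₁ and k₂ be the continuous solutions of the backstepping kernel equations kᵢ(x) = −βᵢ(x) + ∫₀ˣ βᵢ(x−y) kᵢ(y) dy for i = 1, 2. Then ‖k₁ − k₂‖_∞ ≤ e^{3B} ‖β₁ − β₂‖_∞. -/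
open MeasureTheory

/-- supremum norm on C⁰[0,1] -/
noncomputable def supNorm (f : ℝ → ℝ) : ℝ := sSup ((fun x => |f x|) '' Set.Icc 0 1)

lemma supNorm_le {f : ℝ → ℝ} {M : ℝ} (h : ∀ x ∈ Set.Icc (0:ℝ) 1, |f x| ≤ M) :
    supNorm f ≤ M := by
  apply Real.sSup_le
  · rintro y ⟨x, hx, rfl⟩; exact h x hx
  · exact (abs_nonneg (f 0)).trans (h 0 (by norm_num))

lemma le_supNorm {f : ℝ → ℝ} (hf : ContinuousOn f (Set.Icc 0 1))
    {x : ℝ} (hx : x ∈ Set.Icc (0:ℝ) 1) : |f x| ≤ supNorm f := by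
  apply le_csSup
  · exact (isCompact_Icc.image_of_continuousOn
      (continuous_abs.comp_continuousOn hf)).bddAbove
  · exact ⟨x, hx, rfl⟩

/-- projection onto [0,1] -/
noncomputable def pj (z : ℝ) : ℝ := max 0 (min 1 z)

lemma pj_mem (z : ℝ) : pj z ∈ Set.Icc (0:ℝ) 1 :=
  ⟨le_max_left _ _, max_le (by norm_num) (min_le_left _ _)⟩

lemma pj_eq {z : ℝ} (hz : z ∈ Set.Icc (0:ℝ) 1) : pj z = z := by
  rw [pj, min_eq_right hz.2, max_eq_right hz.1]

lemma pj_cont : Continuous pj := continuous_const.max (continuous_const.min continuous_id)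

lemma gronwall_aux (g : ℝ → ℝ) (hg : Continuous g) (hg0 : ∀ x, 0 ≤ g x)
    (c K : ℝ) (hc : 0 ≤ c) (hK : 0 < K)
    (h : ∀ x ∈ Set.Icc (0:ℝ) 1, g x ≤ c + K * ∫ y in (0:ℝ)..x, g y) :
    ∀ x ∈ Set.Icc (0:ℝ) 1, g x ≤ c * Real.exp (K * x) := by
  set F : ℝ → ℝ := fun x => ∫ y in (0:ℝ)..x, g y with hFdef
  have hFderiv : ∀ x : ℝ, HasDerivAt F (g x) x := fun x =>
    (hg.integral_hasStrictDerivAt 0 x).hasDerivAt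
  have hFcont : ContinuousOn F (Set.Icc 0 1) :=
    fun x _ => (hFderiv x).continuousAt.continuousWithinAt
  have hF0 : F 0 = 0 := intervalIntegral.integral_same
  have hFnonneg : ∀ x ∈ Set.Icc (0:ℝ) 1, 0 ≤ F x := fun x hx =>
    intervalIntegral.integral_nonneg hx.1 (fun y _ => hg0 y)
  have key : ∀ x ∈ Set.Icc (0:ℝ) 1, ‖F x‖ ≤ gronwallBound 0 K c (x - 0) := by
    apply norm_le_gronwallBound_of_norm_deriv_right_le hFcont
      (fun x _ => (hFderiv x).hasDerivWithinAt)
    · simp [hF0]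
    · intro x hx
      have hx' : x ∈ Set.Icc (0:ℝ) 1 := ⟨hx.1, hx.2.le⟩
      have h1 := h x hx'
      rw [Real.norm_eq_abs, Real.norm_eq_abs, abs_of_nonneg (hg0 x),
        abs_of_nonneg (hFnonneg x hx')]
      linarith
  intro x hx
  have h2 := key x hx
  rw [Real.norm_eq_abs, abs_of_nonneg (hFnonneg x hx), sub_zero,
    gronwallBound_of_K_ne_0 hK.ne'] at h2
  have h3 := h x hx
  have hKne : K ≠ 0 := hK.ne'
  have : K * F x ≤ c * (Real.exp (K * x) - 1) := by
    have := mul_le_mul_of_nonneg_left h2 hK.le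
    calc K * F x ≤ K * (0 * Real.exp (K * x) + c / K * (Real.exp (K * x) - 1)) := this
      _ = c * (Real.exp (K * x) - 1) := by field_simp; ring
  linarith

/-- Lipschitzness of the backstepping kernel operator:
‖k₁ − k₂‖_∞ ≤ e^{3B} ‖β₁ − β₂‖_∞. -/
theorem kernel_operator_lipschitz (B : ℝ) (hB : 0 < B)
    (β₁ β₂ k₁ k₂ : ℝ → ℝ)
    (hβ₁ : ContinuousOn β₁ (Set.Icc 0 1))
    (hβ₂ : ContinuousOn β₂ (Set.Icc 0 1))
    (hB₁ : supNorm β₁ ≤ B) (hB₂ : supNorm β₂ ≤ B)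
    (hk₁ : ContinuousOn k₁ (Set.Icc 0 1))
    (hk₂ : ContinuousOn k₂ (Set.Icc 0 1))
    (heq₁ : ∀ x ∈ Set.Icc (0:ℝ) 1,
      k₁ x = -β₁ x + ∫ y in (0:ℝ)..x, β₁ (x - y) * k₁ y)
    (heq₂ : ∀ x ∈ Set.Icc (0:ℝ) 1,
      k₂ x = -β₂ x + ∫ y in (0:ℝ)..x, β₂ (x - y) * k₂ y) :
    supNorm (fun x => k₁ x - k₂ x) ≤
      Real.exp (3 * B) * supNorm (fun x => β₁ x - β₂ x) := by
  -- extensions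
  set b₁ : ℝ → ℝ := fun z => β₁ (pj z) with hb₁def
  set b₂ : ℝ → ℝ := fun z => β₂ (pj z) with hb₂def
  set c₁ : ℝ → ℝ := fun z => k₁ (pj z) with hc₁def
  set c₂ : ℝ → ℝ := fun z => k₂ (pj z) with hc₂def
  have hb₁c : Continuous b₁ := hβ₁.comp_continuous pj_cont pj_mem
  have hb₂c : Continuous b₂ := hβ₂.comp_continuous pj_cont pj_mem
  have hc₁c : Continuous c₁ := hk₁.comp_continuous pj_cont pj_mem
  have hc₂c : Continuous c₂ := hk₂.comp_continuous pj_cont pj_mem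
  set δ := supNorm (fun x => β₁ x - β₂ x) with hδdef
  have hδ0 : 0 ≤ δ := (abs_nonneg _).trans
    (le_supNorm (hβ₁.sub hβ₂) (by norm_num : (0:ℝ) ∈ Set.Icc (0:ℝ) 1))
  have hb₁B : ∀ z, |b₁ z| ≤ B := fun z => (le_supNorm hβ₁ (pj_mem z)).trans hB₁
  have hb₂B : ∀ z, |b₂ z| ≤ B := fun z => (le_supNorm hβ₂ (pj_mem z)).trans hB₂
  have hbδ : ∀ z, |b₁ z - b₂ z| ≤ δ := fun z => le_supNorm (hβ₁.sub hβ₂) (pj_mem z)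
  -- rewritten equations for extended functions on Icc
  have heqe₁ : ∀ x ∈ Set.Icc (0:ℝ) 1,
      c₁ x = -b₁ x + ∫ y in (0:ℝ)..x, b₁ (x - y) * c₁ y := by
    intro x hx
    have h1 : ∫ y in (0:ℝ)..x, b₁ (x - y) * c₁ y = ∫ y in (0:ℝ)..x, β₁ (x - y) * k₁ y := by
      apply intervalIntegral.integral_congr
      intro y hy
      rw [Set.uIcc_of_le hx.1] at hy
      have hy1 : y ∈ Set.Icc (0:ℝ) 1 := ⟨hy.1, hy.2.trans hx.2⟩
      have hy2 : x - y ∈ Set.Icc (0:ℝ) 1 := ⟨by linarith [hy.2], by linarith [hy.1, hx.2]⟩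
      simp only [hb₁def, hc₁def, pj_eq hy1, pj_eq hy2]
    rw [h1, hb₁def, hc₁def]
    simp only [pj_eq hx]
    exact heq₁ x hx
  have heqe₂ : ∀ x ∈ Set.Icc (0:ℝ) 1,
      c₂ x = -b₂ x + ∫ y in (0:ℝ)..x, b₂ (x - y) * c₂ y := by
    intro x hx
    have h1 : ∫ y in (0:ℝ)..x, b₂ (x - y) * c₂ y = ∫ y in (0:ℝ)..x, β₂ (x - y) * k₂ y := by
      apply intervalIntegral.integral_congr
      intro y hy
      rw [Set.uIcc_of_le hx.1] at hy
      have hy1 : y ∈ Set.Icc (0:ℝ) 1 := ⟨hy.1, hy.2.trans hx.2⟩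
      have hy2 : x - y ∈ Set.Icc (0:ℝ) 1 := ⟨by linarith [hy.2], by linarith [hy.1, hx.2]⟩
      simp only [hb₂def, hc₂def, pj_eq hy1, pj_eq hy2]
    rw [h1, hb₂def, hc₂def]
    simp only [pj_eq hx]
    exact heq₂ x hx
  -- a priori bound: |c₁| ≤ B e^B on Icc
  have bound₁ : ∀ x ∈ Set.Icc (0:ℝ) 1, |c₁ x| ≤ B * Real.exp B := by
    have key := gronwall_aux (fun z => |c₁ z|) (continuous_abs.comp hc₁c)
      (fun z => abs_nonneg _) B B hB.le hB ?_
    · intro x hx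
      calc |c₁ x| ≤ B * Real.exp (B * x) := key x hx
        _ ≤ B * Real.exp B := by
          apply mul_le_mul_of_nonneg_left _ hB.le
          exact Real.exp_le_exp.2 (by nlinarith [hx.1, hx.2])
    · intro x hx
      show |c₁ x| ≤ B + B * ∫ y in (0:ℝ)..x, |c₁ y|
      rw [heqe₁ x hx]
      have hint : |∫ y in (0:ℝ)..x, b₁ (x - y) * c₁ y| ≤ B * ∫ y in (0:ℝ)..x, |c₁ y| := by
        calc |∫ y in (0:ℝ)..x, b₁ (x - y) * c₁ y|
            ≤ ∫ y in (0:ℝ)..x, |b₁ (x - y) * c₁ y| :=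
              intervalIntegral.abs_integral_le_integral_abs hx.1
          _ ≤ ∫ y in (0:ℝ)..x, B * |c₁ y| := by
              apply intervalIntegral.integral_mono_on hx.1
              · exact ((hb₁c.comp (continuous_const.sub continuous_id)).mul
                  hc₁c).abs.intervalIntegrable _ _
              · exact (continuous_const.mul (continuous_abs.comp hc₁c)).intervalIntegrable _ _
              · intro y _
                rw [abs_mul]
                exact mul_le_mul_of_nonneg_right (hb₁B _) (abs_nonneg _)
          _ = B * ∫ y in (0:ℝ)..x, |c₁ y| := by
              rw [intervalIntegral.integral_const_mul]
      calc |-b₁ x + ∫ y in (0:ℝ)..x, b₁ (x - y) * c₁ y|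
          ≤ |b₁ x| + |∫ y in (0:ℝ)..x, b₁ (x - y) * c₁ y| := by
            rw [← abs_neg (b₁ x)] ; exact abs_add_le _ _
        _ ≤ B + B * ∫ y in (0:ℝ)..x, |c₁ y| := add_le_add (hb₁B x) hint
  -- main estimate
  set g : ℝ → ℝ := fun z => |c₁ z - c₂ z| with hgdef
  have hgc : Continuous g := (hc₁c.sub hc₂c).abs
  set M := B * Real.exp B with hMdef
  have hM0 : 0 ≤ M := mul_nonneg hB.le (Real.exp_pos _).le
  have hmain : ∀ x ∈ Set.Icc (0:ℝ) 1, g x ≤ δ * (1 + M) + B * ∫ y in (0:ℝ)..x, g y := by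
    intro x hx
    have hsub : c₁ x - c₂ x = -(b₁ x - b₂ x) +
        ∫ y in (0:ℝ)..x, (b₁ (x - y) - b₂ (x - y)) * c₁ y + b₂ (x - y) * (c₁ y - c₂ y) := by
      have hA : IntervalIntegrable (fun y => b₁ (x - y) * c₁ y) MeasureTheory.volume 0 x :=
        Continuous.intervalIntegrable
          ((hb₁c.comp (continuous_const.sub continuous_id)).mul hc₁c) 0 x
      have hBi : IntervalIntegrable (fun y => b₂ (x - y) * c₂ y) MeasureTheory.volume 0 x :=
        Continuous.intervalIntegrable
          ((hb₂c.comp (continuous_const.sub continuous_id)).mul hc₂c) 0 x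
      have hsplit : (∫ y in (0:ℝ)..x,
          (b₁ (x - y) - b₂ (x - y)) * c₁ y + b₂ (x - y) * (c₁ y - c₂ y))
          = (∫ y in (0:ℝ)..x, b₁ (x - y) * c₁ y)
            - ∫ y in (0:ℝ)..x, b₂ (x - y) * c₂ y := by
        rw [← intervalIntegral.integral_sub hA hBi]
        exact intervalIntegral.integral_congr (fun y _ => by ring)
      rw [hsplit, heqe₁ x hx, heqe₂ x hx]
      ring
    have hintb : |∫ y in (0:ℝ)..x, (b₁ (x - y) - b₂ (x - y)) * c₁ y
        + b₂ (x - y) * (c₁ y - c₂ y)| ≤ δ * M * x + B * ∫ y in (0:ℝ)..x, g y := by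
      have hcint : Continuous fun y => (b₁ (x - y) - b₂ (x - y)) * c₁ y
          + b₂ (x - y) * (c₁ y - c₂ y) :=
        (((hb₁c.sub hb₂c).comp (continuous_const.sub continuous_id)).mul hc₁c).add
          ((hb₂c.comp (continuous_const.sub continuous_id)).mul (hc₁c.sub hc₂c))
      calc |∫ y in (0:ℝ)..x, (b₁ (x - y) - b₂ (x - y)) * c₁ y + b₂ (x - y) * (c₁ y - c₂ y)|
          ≤ ∫ y in (0:ℝ)..x, |(b₁ (x - y) - b₂ (x - y)) * c₁ y + b₂ (x - y) * (c₁ y - c₂ y)| :=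
            intervalIntegral.abs_integral_le_integral_abs hx.1
        _ ≤ ∫ y in (0:ℝ)..x, (δ * M + B * g y) := by
            apply intervalIntegral.integral_mono_on hx.1
            · exact hcint.abs.intervalIntegrable _ _
            · exact (continuous_const.add (continuous_const.mul hgc)).intervalIntegrable _ _
            · intro y hy
              have hy1 : y ∈ Set.Icc (0:ℝ) 1 := ⟨hy.1, hy.2.trans hx.2⟩
              have h1 : |(b₁ (x - y) - b₂ (x - y)) * c₁ y| ≤ δ * M := by
                rw [abs_mul]
                exact mul_le_mul (hbδ _) (bound₁ y hy1) (abs_nonneg _) hδ0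
              have h2 : |b₂ (x - y) * (c₁ y - c₂ y)| ≤ B * g y := by
                rw [abs_mul]
                exact mul_le_mul_of_nonneg_right (hb₂B _) (abs_nonneg _)
              calc |(b₁ (x - y) - b₂ (x - y)) * c₁ y + b₂ (x - y) * (c₁ y - c₂ y)|
                  ≤ |(b₁ (x - y) - b₂ (x - y)) * c₁ y| + |b₂ (x - y) * (c₁ y - c₂ y)| :=
                    abs_add_le _ _
                _ ≤ δ * M + B * g y := add_le_add h1 h2
        _ = δ * M * x + B * ∫ y in (0:ℝ)..x, g y := by
            rw [intervalIntegral.integral_add (f := fun _ => δ * M) (g := fun y => B * g y) (intervalIntegrable_const)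
              ((continuous_const.mul hgc).intervalIntegrable _ _),
              intervalIntegral.integral_const, intervalIntegral.integral_const_mul]
            simp; ring
    calc g x = |c₁ x - c₂ x| := rfl
      _ ≤ |b₁ x - b₂ x| + |∫ y in (0:ℝ)..x, (b₁ (x - y) - b₂ (x - y)) * c₁ y
            + b₂ (x - y) * (c₁ y - c₂ y)| := by
          rw [hsub, ← abs_neg (b₁ x - b₂ x)]; exact abs_add_le _ _
      _ ≤ δ + (δ * M * x + B * ∫ y in (0:ℝ)..x, g y) := add_le_add (hbδ x) hintb
      _ ≤ δ * (1 + M) + B * ∫ y in (0:ℝ)..x, g y := by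
          have : δ * M * x ≤ δ * M := by
            nlinarith [hx.1, hx.2, mul_nonneg hδ0 hM0]
          linarith
  -- apply Gronwall
  have key := gronwall_aux g hgc (fun z => abs_nonneg _) (δ * (1 + M)) B
    (mul_nonneg hδ0 (by linarith)) hB hmain
  apply supNorm_le
  intro x hx
  have h1 : |k₁ x - k₂ x| = g x := by
    simp only [hgdef, hc₁def, hc₂def, pj_eq hx]
  rw [h1]
  calc g x ≤ δ * (1 + M) * Real.exp (B * x) := key x hx
    _ ≤ δ * (1 + M) * Real.exp B := by
        apply mul_le_mul_of_nonneg_left _ (mul_nonneg hδ0 (by linarith))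
        exact Real.exp_le_exp.2 (by nlinarith [hx.1, hx.2])
    _ ≤ Real.exp (3 * B) * δ := by
        have h2 : (1 + M) * Real.exp B ≤ Real.exp (3 * B) := by
          have he1 : 1 + B ≤ Real.exp B := by linarith [Real.add_one_le_exp B]
          have he2 : Real.exp (3 * B) = Real.exp B * Real.exp B * Real.exp B := by
            rw [← Real.exp_add, ← Real.exp_add]; ring_nf
          have hep : 0 < Real.exp B := Real.exp_pos B
          rw [hMdef, he2]
          nlinarith [Real.exp_pos B, hB]
        calc δ * (1 + M) * Real.exp B = δ * ((1 + M) * Real.exp B) := by ring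
          _ ≤ δ * Real.exp (3 * B) := mul_le_mul_of_nonneg_left h2 hδ0
          _ = Real.exp (3 * B) * δ := by ring
end

section
/- (Lyapunov estimate for the perturbed target system.) Let B > 0, c > 0, and ε ∈ (0, c e^{−c/2}/(1+B)). Let δ : [0,1] → ℝ be continuous with ‖δ‖_∞ ≤ (1+B)ε. Suppose ŵ : [0,1] × [0,∞) → ℝ is continuously differentiable and satisfies ŵ_t(x,t) = ŵ_x(x,t) + δ(x) ŵ(0,t) for all x ∈ (0,1), t > 0, and ŵ(1,t) = 0 for all t ≥ 0. Define V(t) = ∫₀¹ e^{cx} ŵ(x,t)² dx. Then c* := c − (e^c/c) ε² (1+B)² > 0 and V(t) ≤ V(0) e^{−c* t} for all t ≥ 0. -/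
open MeasureTheory

/-- auxiliary pointwise Young-type inequality -/
lemma young_aux (E d a b k : ℝ) (hE : 0 ≤ E) (hk : 0 < k) :
    E * (2 * b * (d * a)) ≤ (E * d ^ 2) * (a ^ 2 / k) + k * (E * b ^ 2) := by
  have h2 : 0 ≤ (d * a - k * b) ^ 2 / k := div_nonneg (sq_nonneg _) hk.le
  have h3 : (d * a - k * b) ^ 2 / k
      = d ^ 2 * (a ^ 2 / k) + k * b ^ 2 - 2 * b * (d * a) := by
    field_simp
    ring
  rw [h3] at h2
  have h4 : 2 * b * (d * a) ≤ d ^ 2 * (a ^ 2 / k) + k * b ^ 2 := by linarith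
  have h5 := mul_le_mul_of_nonneg_left h4 hE
  calc E * (2 * b * (d * a)) ≤ E * (d ^ 2 * (a ^ 2 / k) + k * b ^ 2) := h5
    _ = (E * d ^ 2) * (a ^ 2 / k) + k * (E * b ^ 2) := by ring

set_option maxHeartbeats 2000000 in
/-- Lyapunov estimate for the perturbed target system:
for ε ∈ (0, c e^{−c/2}/(1+B)) and ‖δ‖_∞ ≤ (1+B)ε, the Lyapunov functional
V(t) = ∫₀¹ e^{cx} ŵ(x,t)² dx of the system ŵ_t = ŵ_x + δ(x) ŵ(0,t), ŵ(1,t) = 0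
decays as V(t) ≤ V(0) e^{−c* t}, where c* = c − (e^c/c) ε² (1+B)² > 0. -/
theorem lyapunov_estimate (B c ε : ℝ) (hB : 0 < B) (hc : 0 < c)
    (hε : 0 < ε ∧ ε < c * Real.exp (-c / 2) / (1 + B))
    (δ : ℝ → ℝ) (hδc : ContinuousOn δ (Set.Icc 0 1))
    (hδ : supNorm δ ≤ (1 + B) * ε)
    (w wt wx : ℝ → ℝ → ℝ)
    (hw : ContinuousOn (fun p : ℝ × ℝ => w p.1 p.2) (Set.Icc 0 1 ×ˢ Set.Ici 0))
    (hwt : ContinuousOn (fun p : ℝ × ℝ => wt p.1 p.2) (Set.Icc 0 1 ×ˢ Set.Ici 0))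
    (hwx : ContinuousOn (fun p : ℝ × ℝ => wx p.1 p.2) (Set.Icc 0 1 ×ˢ Set.Ici 0))
    (hpde : ∀ x ∈ Set.Ioo (0:ℝ) 1, ∀ t > (0:ℝ),
      HasDerivAt (fun τ => w x τ) (wt x t) t ∧
      HasDerivAt (fun ξ => w ξ t) (wx x t) x ∧
      wt x t = wx x t + δ x * w 0 t)
    (hbc : ∀ t ≥ (0:ℝ), w 1 t = 0) :
    0 < c - Real.exp c / c * ε ^ 2 * (1 + B) ^ 2 ∧
    ∀ t ≥ (0:ℝ),
      (∫ x in (0:ℝ)..1, Real.exp (c * x) * w x t ^ 2) ≤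
        (∫ x in (0:ℝ)..1, Real.exp (c * x) * w x 0 ^ 2) *
          Real.exp (-(c - Real.exp c / c * ε ^ 2 * (1 + B) ^ 2) * t) := by
  obtain ⟨hε0, hε1⟩ := hε
  have hB1 : (0:ℝ) < 1 + B := by linarith
  have hexpc : (0:ℝ) < Real.exp c := Real.exp_pos c
  set K : ℝ := Real.exp c / c * ε ^ 2 * (1 + B) ^ 2 with hKdef
  have hK0 : 0 < K := by positivity
  -- positivity of c*
  have hcK : 0 < c - K := by
    have h1 : ε * (1 + B) < c * Real.exp (-c/2) := by
      exact (lt_div_iff₀ hB1).mp hε1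
    have h2 : Real.exp (-c/2) * Real.exp (-c/2) = Real.exp (-c) := by
      rw [← Real.exp_add]; ring_nf
    have h3 : Real.exp (-c) * Real.exp c = 1 := by
      rw [← Real.exp_add]; simp
    have h4 : ε * (1 + B) * (ε * (1 + B)) < (c * Real.exp (-c/2)) * (c * Real.exp (-c/2)) := by
      have h0 : 0 < ε * (1 + B) := by positivity
      nlinarith
    have h5 : ε ^ 2 * (1 + B) ^ 2 < c ^ 2 * Real.exp (-c) := by nlinarith
    have h6 : K < Real.exp c / c * (c ^ 2 * Real.exp (-c)) := by
      rw [hKdef]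
      have : 0 < Real.exp c / c := by positivity
      nlinarith
    have h7 : Real.exp c / c * (c ^ 2 * Real.exp (-c)) = c := by
      field_simp
      nlinarith [h3]
    linarith [h6, h7.symm.le]
  clear_value K
  refine ⟨hcK, ?_⟩
  -- notation
  set V : ℝ → ℝ := fun t => ∫ x in (0:ℝ)..1, Real.exp (c * x) * w x t ^ 2 with hVdef
  set V' : ℝ → ℝ := fun t => ∫ x in (0:ℝ)..1, Real.exp (c * x) * (2 * w x t * wt x t) with hV'def
  have hexpcont : Continuous (fun x : ℝ => Real.exp (c * x)) :=
    Real.continuous_exp.comp (continuous_const.mul continuous_id)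
  -- slice continuity
  have hslice : ∀ (f : ℝ → ℝ → ℝ), ContinuousOn (fun p : ℝ × ℝ => f p.1 p.2)
      (Set.Icc 0 1 ×ˢ Set.Ici 0) → ∀ t ≥ (0:ℝ), ContinuousOn (fun x => f x t) (Set.Icc 0 1) := by
    intro f hf t ht
    have hmap : ContinuousOn (fun x : ℝ => ((x, t) : ℝ × ℝ)) (Set.Icc 0 1) :=
      (continuous_id.prodMk continuous_const).continuousOn
    exact hf.comp hmap (fun x hx => Set.mk_mem_prod hx ht)
  have hwc := hslice w hw
  have hwtc := hslice wt hwt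
  have hwxc := hslice wx hwx
  have hIsub : Set.uIoc (0:ℝ) 1 ⊆ Set.Icc 0 1 := by
    rw [Set.uIoc_of_le zero_le_one]; exact Set.Ioc_subset_Icc_self
  -- integrability of the main integrand
  have hFint : ∀ t ≥ (0:ℝ), IntervalIntegrable (fun x => Real.exp (c * x) * w x t ^ 2)
      volume 0 1 := by
    intro t ht
    apply ContinuousOn.intervalIntegrable
    rw [Set.uIcc_of_le zero_le_one]
    exact (hexpcont.continuousOn).mul ((hwc t ht).pow 2)
  have hVnonneg : ∀ t, 0 ≤ V t := by
    intro t
    apply intervalIntegral.integral_nonneg zero_le_one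
    intro x _
    positivity
  -- continuity of V on [0, ∞)
  have hVcont : ContinuousOn V (Set.Ici 0) := by
    intro t₀ ht₀
    have hcompact : IsCompact (Set.Icc (0:ℝ) 1 ×ˢ Set.Icc 0 (t₀ + 1)) :=
      isCompact_Icc.prod isCompact_Icc
    have hsub : Set.Icc (0:ℝ) 1 ×ˢ Set.Icc 0 (t₀ + 1) ⊆ Set.Icc 0 1 ×ˢ Set.Ici 0 :=
      Set.prod_mono_right (Set.Icc_subset_Ici_self)
    obtain ⟨C, hC⟩ := hcompact.exists_bound_of_continuousOn (hw.mono hsub)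
    apply intervalIntegral.continuousWithinAt_of_dominated_interval
      (bound := fun _ => Real.exp c * C ^ 2)
    · filter_upwards [self_mem_nhdsWithin] with t ht
      apply ContinuousOn.aestronglyMeasurable _ measurableSet_uIoc
      exact ((hexpcont.continuousOn).mul ((hwc t ht).pow 2)).mono hIsub
    · filter_upwards [self_mem_nhdsWithin,
        mem_nhdsWithin_of_mem_nhds (Iic_mem_nhds (by linarith : t₀ < t₀ + 1))] with t ht1 ht2
      apply Filter.Eventually.of_forall
      intro x hx
      have hx' : x ∈ Set.Icc (0:ℝ) 1 := hIsub hx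
      have hwb : |w x t| ≤ C := by
        have := hC (x, t) (Set.mk_mem_prod hx' ⟨ht1, ht2⟩)
        simpa [Real.norm_eq_abs] using this
      have hcx : Real.exp (c * x) ≤ Real.exp c := by
        apply Real.exp_le_exp.2
        nlinarith [hx'.1, hx'.2]
      have hCnn : 0 ≤ C := le_trans (abs_nonneg _) hwb
      rw [Real.norm_eq_abs, abs_mul, abs_of_pos (Real.exp_pos _),
        abs_of_nonneg (sq_nonneg (w x t)), ← sq_abs]
      exact mul_le_mul hcx (pow_le_pow_left₀ (abs_nonneg _) hwb 2) (by positivity) hexpc.le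
    · exact intervalIntegrable_const
    · apply Filter.Eventually.of_forall
      intro x hx
      have hx' : x ∈ Set.Icc (0:ℝ) 1 := hIsub hx
      have hmap : ContinuousOn (fun t : ℝ => ((x, t) : ℝ × ℝ)) (Set.Ici 0) :=
        (continuous_const.prodMk continuous_id).continuousOn
      have hwslice : ContinuousOn (fun t => w x t) (Set.Ici 0) :=
        hw.comp hmap (fun t ht => Set.mk_mem_prod hx' ht)
      exact (continuousWithinAt_const.mul ((hwslice t₀ ht₀).pow 2))
  -- differentiability of V for t > 0
  have hVderiv : ∀ t₀ > (0:ℝ), HasDerivAt V (V' t₀) t₀ := by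
    intro t₀ ht₀
    have hball : Metric.ball t₀ (t₀/2) ⊆ Set.Icc (t₀/2) (2*t₀) := by
      intro τ hτ
      rw [Metric.mem_ball, Real.dist_eq, abs_sub_lt_iff] at hτ
      constructor <;> linarith [hτ.1, hτ.2]
    have hballpos : ∀ τ ∈ Metric.ball t₀ (t₀/2), (0:ℝ) < τ := by
      intro τ hτ
      have := hball hτ
      have := this.1
      linarith
    have hcompact : IsCompact (Set.Icc (0:ℝ) 1 ×ˢ Set.Icc (t₀/2) (2*t₀)) :=
      isCompact_Icc.prod isCompact_Icc
    have hsub : Set.Icc (0:ℝ) 1 ×ˢ Set.Icc (t₀/2) (2*t₀) ⊆ Set.Icc 0 1 ×ˢ Set.Ici 0 :=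
      Set.prod_mono_right (fun a ha => le_trans (by linarith : (0:ℝ) ≤ t₀/2) ha.1)
    have hcont' : ContinuousOn
        (fun p : ℝ × ℝ => Real.exp (c * p.1) * (2 * w p.1 p.2 * wt p.1 p.2))
        (Set.Icc (0:ℝ) 1 ×ˢ Set.Icc (t₀/2) (2*t₀)) :=
      ((hexpcont.comp continuous_fst).continuousOn).mul
        (((continuous_const.continuousOn).mul (hw.mono hsub)).mul (hwt.mono hsub))
    obtain ⟨C, hC⟩ := hcompact.exists_bound_of_continuousOn hcont'
    have key := intervalIntegral.hasDerivAt_integral_of_dominated_loc_of_deriv_le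
      (F := fun t x => Real.exp (c * x) * w x t ^ 2)
      (F' := fun t x => Real.exp (c * x) * (2 * w x t * wt x t))
      (a := (0:ℝ)) (b := 1) (μ := volume) (bound := fun _ => C)
      (Metric.ball_mem_nhds t₀ (half_pos ht₀))
      (by
        filter_upwards [Ioi_mem_nhds ht₀] with t ht
        apply ContinuousOn.aestronglyMeasurable _ measurableSet_uIoc
        exact ((hexpcont.continuousOn).mul ((hwc t (le_of_lt ht)).pow 2)).mono hIsub)
      (hFint t₀ (le_of_lt ht₀))
      (by
        apply ContinuousOn.aestronglyMeasurable _ measurableSet_uIoc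
        refine ContinuousOn.mono ?_ hIsub
        exact (hexpcont.continuousOn).mul
          (((continuous_const.continuousOn).mul (hwc t₀ ht₀.le)).mul (hwtc t₀ ht₀.le)))
      (by
        apply Filter.Eventually.of_forall
        intro x hx τ hτ
        have hx' : x ∈ Set.Icc (0:ℝ) 1 := hIsub hx
        have := hC (x, τ) (Set.mk_mem_prod hx' (hball hτ))
        exact this)
      intervalIntegrable_const
      (by
        have h1 : ∀ᵐ x : ℝ ∂volume, x ≠ (1:ℝ) :=
          by rw [MeasureTheory.ae_iff]; simp
        filter_upwards [h1] with x hx1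
        intro hx τ hτ
        have hx' : x ∈ Set.Ioo (0:ℝ) 1 := by
          rw [Set.uIoc_of_le zero_le_one] at hx
          exact ⟨hx.1, lt_of_le_of_ne hx.2 hx1⟩
        have hτ0 : 0 < τ := hballpos τ hτ
        have hd := (hpde x hx' τ hτ0).1
        have := (hd.pow 2).const_mul (Real.exp (c * x))
        refine this.congr_deriv ?_
        push_cast
        ring)
    exact key.2
  -- pointwise bound on δ
  have hδb : ∀ x ∈ Set.Icc (0:ℝ) 1, |δ x| ≤ (1 + B) * ε := by
    intro x hx
    refine le_trans ?_ hδ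
    rw [supNorm]
    exact le_csSup (isCompact_Icc.image_of_continuousOn hδc.abs).bddAbove ⟨x, hx, rfl⟩
  -- value of ∫ exp(cx)
  have hIexp : ∫ x in (0:ℝ)..1, Real.exp (c * x) = (Real.exp c - 1) / c := by
    have hanti : ∀ x ∈ Set.uIcc (0:ℝ) 1,
        HasDerivAt (fun y => Real.exp (c * y) / c) (Real.exp (c * x)) x := by
      intro x _
      have h1 : HasDerivAt (fun y : ℝ => c * y) c x := by
        simpa using (hasDerivAt_id x).const_mul c
      have h2 := (Real.hasDerivAt_exp (c * x)).comp x h1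
      have := h2.div_const c
      refine this.congr_deriv ?_
      field_simp
    rw [intervalIntegral.integral_eq_sub_of_hasDerivAt hanti
      (hexpcont.intervalIntegrable 0 1)]
    rw [mul_one, mul_zero, Real.exp_zero]
    ring
  -- the differential inequality
  have hV'le : ∀ t > (0:ℝ), V' t ≤ -(c - K) * V t := by
    intro t ht
    have ht' : (0:ℝ) ≤ t := ht.le
    -- rewrite using the PDE
    have hstep1 : V' t = ∫ x in (0:ℝ)..1,
        Real.exp (c * x) * (2 * w x t * (wx x t + δ x * w 0 t)) := by
      apply intervalIntegral.integral_congr_ae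
      have h1 : ∀ᵐ x : ℝ ∂volume, x ≠ (1:ℝ) := by rw [MeasureTheory.ae_iff]; simp
      filter_upwards [h1] with x hx1 hx
      have hx' : x ∈ Set.Ioo (0:ℝ) 1 := by
        rw [Set.uIoc_of_le zero_le_one] at hx
        exact ⟨hx.1, lt_of_le_of_ne hx.2 hx1⟩
      rw [(hpde x hx' t ht).2.2]
    -- integrabilities
    have hint1 : IntervalIntegrable (fun x => Real.exp (c * x) * (2 * w x t * wx x t))
        volume 0 1 := by
      apply ContinuousOn.intervalIntegrable
      rw [Set.uIcc_of_le zero_le_one]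
      exact (hexpcont.continuousOn).mul
        (((continuous_const.continuousOn).mul (hwc t ht')).mul (hwxc t ht'))
    have hint2 : IntervalIntegrable (fun x => Real.exp (c * x) * (2 * w x t * (δ x * w 0 t)))
        volume 0 1 := by
      apply ContinuousOn.intervalIntegrable
      rw [Set.uIcc_of_le zero_le_one]
      exact (hexpcont.continuousOn).mul
        (((continuous_const.continuousOn).mul (hwc t ht')).mul
          (hδc.mul continuousOn_const))
    -- split
    have hsplit : V' t = (∫ x in (0:ℝ)..1, Real.exp (c * x) * (2 * w x t * wx x t))
        + ∫ x in (0:ℝ)..1, Real.exp (c * x) * (2 * w x t * (δ x * w 0 t)) := by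
      rw [hstep1, ← intervalIntegral.integral_add hint1 hint2]
      apply intervalIntegral.integral_congr
      intro x _
      ring
    -- integration by parts for the first piece
    have hFTC : (∫ x in (0:ℝ)..1, (c * (Real.exp (c * x) * w x t ^ 2)
        + Real.exp (c * x) * (2 * w x t * wx x t)))
        = Real.exp (c * 1) * w 1 t ^ 2 - Real.exp (c * 0) * w 0 t ^ 2 := by
      apply intervalIntegral.integral_eq_sub_of_hasDeriv_right_of_le
        (f := fun x => Real.exp (c * x) * w x t ^ 2) zero_le_one
      · exact (hexpcont.continuousOn).mul ((hwc t ht').pow 2)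
      · intro x hx
        have h1 : HasDerivAt (fun y : ℝ => c * y) c x := by
          simpa using (hasDerivAt_id x).const_mul c
        have h2 : HasDerivAt (fun y => Real.exp (c * y)) (Real.exp (c * x) * c) x :=
          (Real.hasDerivAt_exp (c * x)).comp x h1
        have h3 : HasDerivAt (fun y => w y t) (wx x t) x := (hpde x hx t ht).2.1
        have h4 := h2.mul (h3.pow 2)
        refine (HasDerivAt.congr_deriv h4 ?_).hasDerivWithinAt
        push_cast
        simp only [Pi.pow_apply]
        ring
      · apply ContinuousOn.intervalIntegrable
        rw [Set.uIcc_of_le zero_le_one]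
        exact ((continuous_const.continuousOn).mul
            ((hexpcont.continuousOn).mul ((hwc t ht').pow 2))).add
          ((hexpcont.continuousOn).mul
            (((continuous_const.continuousOn).mul (hwc t ht')).mul (hwxc t ht')))
    have hintc : IntervalIntegrable (fun x => c * (Real.exp (c * x) * w x t ^ 2))
        volume 0 1 := (hFint t ht').const_mul c
    have hIX : (∫ x in (0:ℝ)..1, (c * (Real.exp (c * x) * w x t ^ 2)
        + Real.exp (c * x) * (2 * w x t * wx x t)))
        = c * V t + ∫ x in (0:ℝ)..1, Real.exp (c * x) * (2 * w x t * wx x t) := by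
      rw [intervalIntegral.integral_add hintc hint1, intervalIntegral.integral_const_mul]
    have hI1 : (∫ x in (0:ℝ)..1, Real.exp (c * x) * (2 * w x t * wx x t))
        = - w 0 t ^ 2 - c * V t := by
      have hb := hbc t ht'
      rw [hIX] at hFTC
      rw [hb] at hFTC
      simp only [mul_zero, mul_one, zero_pow, Real.exp_zero] at hFTC
      linarith [hFTC]
    -- bound the perturbation term
    set J : ℝ := ∫ x in (0:ℝ)..1, Real.exp (c * x) * (2 * w x t * (δ x * w 0 t)) with hJdef
    have hintδ2 : IntervalIntegrable (fun x => (Real.exp (c * x) * δ x ^ 2) * (w 0 t ^ 2 / K)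
        + K * (Real.exp (c * x) * w x t ^ 2)) volume 0 1 := by
      apply ContinuousOn.intervalIntegrable
      rw [Set.uIcc_of_le zero_le_one]
      exact (((hexpcont.continuousOn).mul (hδc.pow 2)).mul continuousOn_const).add
        ((continuous_const.continuousOn).mul ((hexpcont.continuousOn).mul ((hwc t ht').pow 2)))
    have hJle : J ≤ (∫ x in (0:ℝ)..1, (Real.exp (c * x) * δ x ^ 2)) * (w 0 t ^ 2 / K)
        + K * V t := by
      have hmono : J ≤ ∫ x in (0:ℝ)..1, ((Real.exp (c * x) * δ x ^ 2) * (w 0 t ^ 2 / K)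
          + K * (Real.exp (c * x) * w x t ^ 2)) := by
        apply intervalIntegral.integral_mono_on zero_le_one hint2 hintδ2
        intro x hx
        have hE0 : (0:ℝ) ≤ Real.exp (c * x) := (Real.exp_pos _).le
        exact young_aux (Real.exp (c * x)) (δ x) (w 0 t) (w x t) K hE0 hK0
      have hintδ3 : IntervalIntegrable (fun x => (Real.exp (c * x) * δ x ^ 2) * (w 0 t ^ 2 / K))
          volume 0 1 := by
        apply ContinuousOn.intervalIntegrable
        rw [Set.uIcc_of_le zero_le_one]
        exact ((hexpcont.continuousOn).mul (hδc.pow 2)).mul continuousOn_const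
      have hintδ4 : IntervalIntegrable (fun x => K * (Real.exp (c * x) * w x t ^ 2))
          volume 0 1 := (hFint t ht').const_mul K
      rw [intervalIntegral.integral_add hintδ3 hintδ4,
        intervalIntegral.integral_mul_const, intervalIntegral.integral_const_mul] at hmono
      exact hmono
    -- bound ∫ exp(cx) δ²
    have hIδ : (∫ x in (0:ℝ)..1, (Real.exp (c * x) * δ x ^ 2)) ≤ K := by
      have h1 : (∫ x in (0:ℝ)..1, (Real.exp (c * x) * δ x ^ 2))
          ≤ ∫ x in (0:ℝ)..1, ((1 + B) * ε) ^ 2 * Real.exp (c * x) := by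
        apply intervalIntegral.integral_mono_on zero_le_one
        · apply ContinuousOn.intervalIntegrable
          rw [Set.uIcc_of_le zero_le_one]
          exact (hexpcont.continuousOn).mul (hδc.pow 2)
        · exact (hexpcont.intervalIntegrable 0 1).const_mul _
        · intro x hx
          have hb := hδb x hx
          have h2 : δ x ^ 2 ≤ ((1 + B) * ε) ^ 2 := by
            rw [← sq_abs (δ x)]
            exact pow_le_pow_left₀ (abs_nonneg _) hb 2
          have hE0 : (0:ℝ) ≤ Real.exp (c * x) := (Real.exp_pos _).le
          nlinarith [h2, hE0]
      rw [intervalIntegral.integral_const_mul, hIexp] at h1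
      have h3 : ((1 + B) * ε) ^ 2 * ((Real.exp c - 1) / c) ≤ K := by
        rw [hKdef]
        have h4 : (Real.exp c - 1) / c ≤ Real.exp c / c := by
          gcongr
          linarith
        calc ((1 + B) * ε) ^ 2 * ((Real.exp c - 1) / c)
            ≤ ((1 + B) * ε) ^ 2 * (Real.exp c / c) :=
              mul_le_mul_of_nonneg_left h4 (by positivity)
          _ = Real.exp c / c * ε ^ 2 * (1 + B) ^ 2 := by ring
      linarith
    have hJfinal : J ≤ w 0 t ^ 2 + K * V t := by
      have h2 : (0:ℝ) ≤ w 0 t ^ 2 / K := div_nonneg (sq_nonneg _) hK0.le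
      have h5 : (∫ x in (0:ℝ)..1, (Real.exp (c * x) * δ x ^ 2)) * (w 0 t ^ 2 / K)
          ≤ K * (w 0 t ^ 2 / K) := mul_le_mul_of_nonneg_right hIδ h2
      have h6 : K * (w 0 t ^ 2 / K) = w 0 t ^ 2 := by
        rw [mul_comm, div_mul_cancel₀ _ (ne_of_gt hK0)]
      linarith
    rw [hsplit, hI1]
    linarith
  -- Grönwall via monotonicity
  have hEderiv : ∀ t : ℝ, HasDerivAt (fun τ : ℝ => Real.exp ((c - K) * τ))
      (Real.exp ((c - K) * t) * (c - K)) t := by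
    intro t
    have h1 : HasDerivAt (fun τ : ℝ => (c - K) * τ) (c - K) t := by
      simpa using (hasDerivAt_id t).const_mul (c - K)
    exact (Real.hasDerivAt_exp _).comp t h1
  have hgmono : AntitoneOn (fun t => V t * Real.exp ((c - K) * t)) (Set.Ici 0) := by
    apply antitoneOn_of_deriv_nonpos (convex_Ici 0)
    · exact hVcont.mul (Real.continuous_exp.comp
        (continuous_const.mul continuous_id)).continuousOn
    · intro t ht
      rw [interior_Ici] at ht
      exact ((hVderiv t ht).mul (hEderiv t)).differentiableAt.differentiableWithinAt
    · intro t ht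
      rw [interior_Ici] at ht
      have hd : HasDerivAt (fun t => V t * Real.exp ((c - K) * t)) _ t :=
        (hVderiv t ht).mul (hEderiv t)
      rw [hd.deriv]
      have h1 := hV'le t ht
      have h2 := hVnonneg t
      have hE := Real.exp_pos ((c - K) * t)
      nlinarith [mul_le_mul_of_nonneg_right h1 hE.le]
  intro t ht
  have h := hgmono Set.self_mem_Ici ht ht
  simp only [mul_zero, Real.exp_zero, mul_one] at h
  have hEpos := Real.exp_pos ((c - K) * t)
  have hneg : Real.exp (-(c - K) * t) = (Real.exp ((c - K) * t))⁻¹ := by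
    rw [← Real.exp_neg]
    ring_nf
  rw [hneg, ← div_eq_mul_inv, le_div_iff₀ hEpos]
  exact h
end

section
/- (ISS-type Lyapunov estimate for the transport equation with boundary disturbance.) Let c > 0 and suppose w : [0,1] × [0,∞) → ℝ is continuously differentiable and satisfies w_t(x,t) = w_x(x,t) for all x ∈ (0,1), t > 0. Define V(t) = ∫₀¹ e^{cx} w(x,t)² dx. Then for all t ≥ 0, V(t) ≤ V(0) e^{−ct} + (e^c/c) · sup_{0 ≤ τ ≤ t} w(1,τ)². -/
open MeasureTheory

/-- ISS-type Lyapunov estimate for the transport equation with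
boundary disturbance: if w_t = w_x on (0,1)×(0,∞), then
V(t) ≤ V(0) e^{−ct} + (e^c/c) sup_{0≤τ≤t} w(1,τ)², where V(t) = ∫₀¹ e^{cx} w(x,t)² dx. -/
theorem iss_lyapunov_transport (c : ℝ) (hc : 0 < c)
    (w wt wx : ℝ → ℝ → ℝ)
    (hw : ContinuousOn (fun p : ℝ × ℝ => w p.1 p.2) (Set.Icc 0 1 ×ˢ Set.Ici 0))
    (hwt : ContinuousOn (fun p : ℝ × ℝ => wt p.1 p.2) (Set.Icc 0 1 ×ˢ Set.Ici 0))
    (hwx : ContinuousOn (fun p : ℝ × ℝ => wx p.1 p.2) (Set.Icc 0 1 ×ˢ Set.Ici 0))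
    (hpde : ∀ x ∈ Set.Ioo (0:ℝ) 1, ∀ t > (0:ℝ),
      HasDerivAt (fun τ => w x τ) (wt x t) t ∧
      HasDerivAt (fun ξ => w ξ t) (wx x t) x ∧
      wt x t = wx x t) :
    ∀ t ≥ (0:ℝ),
      (∫ x in (0:ℝ)..1, Real.exp (c * x) * w x t ^ 2) ≤
        (∫ x in (0:ℝ)..1, Real.exp (c * x) * w x 0 ^ 2) * Real.exp (-c * t) +
          Real.exp c / c * sSup ((fun τ => w 1 τ ^ 2) '' Set.Icc 0 t) := by
  intro t ht
  rcases eq_or_lt_of_le ht with rfl | ht0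
  · simp only [Set.Icc_self, Set.image_singleton, csSup_singleton, mul_zero, neg_zero,
      Real.exp_zero, mul_one]
    have h1 : 0 ≤ Real.exp c / c * w 1 0 ^ 2 := by positivity
    linarith
  -- main case : t > 0
  set V : ℝ → ℝ := fun τ => ∫ x in (0:ℝ)..1, Real.exp (c * x) * w x τ ^ 2 with hV
  set M : ℝ := sSup ((fun τ => w 1 τ ^ 2) '' Set.Icc 0 t) with hM
  -- continuity of slices
  have hws : ∀ τ : ℝ, 0 ≤ τ → ContinuousOn (fun x => w x τ) (Set.Icc 0 1) := fun τ hτ =>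
    hw.comp (continuous_id.prodMk continuous_const).continuousOn (fun x hx => ⟨hx, hτ⟩)
  have hwts : ∀ τ : ℝ, 0 ≤ τ → ContinuousOn (fun x => wt x τ) (Set.Icc 0 1) := fun τ hτ =>
    hwt.comp (continuous_id.prodMk continuous_const).continuousOn (fun x hx => ⟨hx, hτ⟩)
  have hwτ : ∀ x ∈ Set.Icc (0:ℝ) 1, ContinuousOn (fun τ => w x τ) (Set.Ici 0) := fun x hx =>
    hw.comp (continuous_const.prodMk continuous_id).continuousOn (fun τ hτ => ⟨hx, hτ⟩)
  have hexpc : Continuous (fun x : ℝ => Real.exp (c * x)) :=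
    Real.continuous_exp.comp (continuous_const.mul continuous_id)
  have hsub : Set.uIoc (0:ℝ) 1 ⊆ Set.Icc 0 1 := by
    rw [Set.uIoc_of_le zero_le_one]; exact Set.Ioc_subset_Icc_self
  have hFs : ∀ τ : ℝ, 0 ≤ τ →
      ContinuousOn (fun x => Real.exp (c * x) * w x τ ^ 2) (Set.Icc 0 1) := fun τ hτ =>
    hexpc.continuousOn.mul ((hws τ hτ).pow 2)
  have hF's : ∀ τ : ℝ, 0 ≤ τ →
      ContinuousOn (fun x => Real.exp (c * x) * (2 * w x τ * wt x τ)) (Set.Icc 0 1) := fun τ hτ =>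
    hexpc.continuousOn.mul ((continuousOn_const.mul (hws τ hτ)).mul (hwts τ hτ))
  -- M bounds
  have hMb : ∀ τ ∈ Set.Icc (0:ℝ) t, w 1 τ ^ 2 ≤ M := by
    intro τ hτ
    refine le_csSup ?_ ⟨τ, hτ, rfl⟩
    exact isCompact_Icc.bddAbove_image
      (((hwτ 1 ⟨zero_le_one, le_rfl⟩).mono Set.Icc_subset_Ici_self).pow 2)
  have hM0 : 0 ≤ M := le_trans (sq_nonneg _) (hMb 0 ⟨le_rfl, ht⟩)
  -- bounds for w, wt on compact set
  obtain ⟨Cw, hCw⟩ := (isCompact_Icc.prod isCompact_Icc).exists_bound_of_continuousOn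
    (hw.mono (Set.prod_mono (subset_refl _) Set.Icc_subset_Ici_self))
  obtain ⟨Ct, hCt⟩ := (isCompact_Icc.prod isCompact_Icc).exists_bound_of_continuousOn
    (hwt.mono (Set.prod_mono (subset_refl _) Set.Icc_subset_Ici_self))
  have h00 : ((0:ℝ), (0:ℝ)) ∈ Set.Icc (0:ℝ) 1 ×ˢ Set.Icc (0:ℝ) (2*t) :=
    ⟨⟨le_rfl, zero_le_one⟩, ⟨le_rfl, by positivity⟩⟩
  have hCw0 : 0 ≤ Cw := le_trans (norm_nonneg _) (hCw _ h00)
  have hCt0 : 0 ≤ Ct := le_trans (norm_nonneg _) (hCt _ h00)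
  have hbnd : ∀ x ∈ Set.Icc (0:ℝ) 1, ∀ τ ∈ Set.Icc (0:ℝ) (2*t),
      ‖Real.exp (c * x) * w x τ ^ 2‖ ≤ Real.exp c * Cw ^ 2 := by
    intro x hx τ hτ
    have h1 : Real.exp (c * x) ≤ Real.exp c := Real.exp_le_exp.mpr (by nlinarith [hx.1, hx.2])
    have h2 : ‖w x τ‖ ≤ Cw := hCw (x, τ) ⟨hx, hτ⟩
    have heq : ‖Real.exp (c * x) * w x τ ^ 2‖ = Real.exp (c * x) * ‖w x τ‖ ^ 2 := by
      rw [norm_mul, norm_pow, Real.norm_of_nonneg (Real.exp_pos _).le]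
    rw [heq]
    exact mul_le_mul h1 (pow_le_pow_left₀ (norm_nonneg _) h2 2) (by positivity) (Real.exp_pos _).le
  have hbnd' : ∀ x ∈ Set.Icc (0:ℝ) 1, ∀ τ ∈ Set.Icc (0:ℝ) (2*t),
      ‖Real.exp (c * x) * (2 * w x τ * wt x τ)‖ ≤ Real.exp c * (2 * Cw * Ct) := by
    intro x hx τ hτ
    have h1 : Real.exp (c * x) ≤ Real.exp c := Real.exp_le_exp.mpr (by nlinarith [hx.1, hx.2])
    have h2 : ‖w x τ‖ ≤ Cw := hCw (x, τ) ⟨hx, hτ⟩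
    have h3 : ‖wt x τ‖ ≤ Ct := hCt (x, τ) ⟨hx, hτ⟩
    have heq : ‖Real.exp (c * x) * (2 * w x τ * wt x τ)‖
        = Real.exp (c * x) * (2 * ‖w x τ‖ * ‖wt x τ‖) := by
      rw [norm_mul, norm_mul, norm_mul, Real.norm_of_nonneg (Real.exp_pos _).le]
      norm_num
    rw [heq]
    have h4 : 2 * ‖w x τ‖ * ‖wt x τ‖ ≤ 2 * Cw * Ct := by
      have := mul_le_mul h2 h3 (norm_nonneg _) hCw0
      nlinarith [norm_nonneg (w x τ), norm_nonneg (wt x τ)]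
    exact mul_le_mul h1 h4 (by positivity) (Real.exp_pos _).le
  -- continuity of V
  have hVcont : ContinuousOn V (Set.Icc 0 t) := by
    intro τ₀ hτ₀
    apply intervalIntegral.continuousWithinAt_of_dominated_interval
      (bound := fun _ => Real.exp c * Cw ^ 2)
    · filter_upwards [self_mem_nhdsWithin] with τ hτ
      exact ((hFs τ hτ.1).mono hsub).aestronglyMeasurable measurableSet_uIoc
    · filter_upwards [self_mem_nhdsWithin] with τ hτ
      refine Filter.Eventually.of_forall (fun x hx => ?_)
      rw [Set.uIoc_of_le zero_le_one] at hx
      exact hbnd x (Set.Ioc_subset_Icc_self hx) τ ⟨hτ.1, by linarith [hτ.2]⟩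
    · exact intervalIntegrable_const
    · refine Filter.Eventually.of_forall (fun x hx => ?_)
      rw [Set.uIoc_of_le zero_le_one] at hx
      have hcw : ContinuousWithinAt (fun τ => w x τ) (Set.Icc 0 t) τ₀ :=
        ((hwτ x (Set.Ioc_subset_Icc_self hx)).mono Set.Icc_subset_Ici_self) τ₀ hτ₀
      exact continuousWithinAt_const.mul (hcw.pow 2)
  -- derivative of V
  have hVderiv : ∀ τ₀ ∈ Set.Ioo (0:ℝ) t, HasDerivAt V
      (∫ x in (0:ℝ)..1, Real.exp (c * x) * (2 * w x τ₀ * wt x τ₀)) τ₀ := by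
    intro τ₀ hτ₀
    have hε0 : 0 < min τ₀ t := lt_min hτ₀.1 ht0
    have hball : Metric.ball τ₀ (min τ₀ t) ⊆ Set.Ioc 0 (2*t) := by
      intro τ hτ
      rw [Metric.mem_ball, Real.dist_eq, abs_lt] at hτ
      constructor
      · have := min_le_left τ₀ t; linarith [hτ.1]
      · have := min_le_right τ₀ t; linarith [hτ.2, hτ₀.2]
    have key := intervalIntegral.hasDerivAt_integral_of_dominated_loc_of_deriv_le
      (μ := MeasureTheory.volume) (a := (0:ℝ)) (b := (1:ℝ)) (x₀ := τ₀)
      (F := fun τ x => Real.exp (c * x) * w x τ ^ 2)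
      (F' := fun τ x => Real.exp (c * x) * (2 * w x τ * wt x τ))
      (bound := fun _ => Real.exp c * (2 * Cw * Ct)) (Metric.ball_mem_nhds τ₀ hε0) ?_ ?_ ?_ ?_ ?_ ?_
    · exact key.2
    · filter_upwards [(isOpen_Ioi).mem_nhds hτ₀.1] with τ (hτ : τ ∈ Set.Ioi (0:ℝ))
      exact ((hFs τ (le_of_lt hτ)).mono hsub).aestronglyMeasurable measurableSet_uIoc
    · apply ContinuousOn.intervalIntegrable
      rw [Set.uIcc_of_le zero_le_one]
      exact hFs τ₀ hτ₀.1.le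
    · exact ((hF's τ₀ hτ₀.1.le).mono hsub).aestronglyMeasurable measurableSet_uIoc
    · refine Filter.Eventually.of_forall (fun x hx => fun τ hτ => ?_)
      rw [Set.uIoc_of_le zero_le_one] at hx
      have hτ' := hball hτ
      exact hbnd' x (Set.Ioc_subset_Icc_self hx) τ ⟨hτ'.1.le, hτ'.2⟩
    · exact intervalIntegrable_const
    · have h1 : ∀ᵐ x : ℝ, x ≠ 1 := by
        rw [ae_iff]
        have hset : {a : ℝ | ¬a ≠ 1} = {1} := by ext y; simp
        rw [hset]
        exact Real.volume_singleton
      filter_upwards [h1] with x hx1 hxI τ hτ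
      rw [Set.uIoc_of_le zero_le_one] at hxI
      have hxI' : x ∈ Set.Ioo (0:ℝ) 1 := ⟨hxI.1, lt_of_le_of_ne hxI.2 hx1⟩
      have hτpos : 0 < τ := (hball hτ).1
      have hd := (hpde x hxI' τ hτpos).1
      have hd2 := (hd.pow 2).const_mul (Real.exp (c * x))
      have : (Real.exp (c * x)) * ((2:ℕ) * w x τ ^ (2-1) * wt x τ)
          = Real.exp (c * x) * (2 * w x τ * wt x τ) := by push_cast; ring
      rwa [this] at hd2
  -- key differential identity
  have hkey : ∀ τ ∈ Set.Ioo (0:ℝ) t,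
      (∫ x in (0:ℝ)..1, Real.exp (c * x) * (2 * w x τ * wt x τ)) + c * V τ
        = Real.exp c * w 1 τ ^ 2 - w 0 τ ^ 2 := by
    intro τ hτ
    have hτ0 : (0:ℝ) ≤ τ := hτ.1.le
    have hint1 : IntervalIntegrable (fun x => Real.exp (c * x) * (2 * w x τ * wt x τ))
        MeasureTheory.volume 0 1 := by
      apply ContinuousOn.intervalIntegrable
      rw [Set.uIcc_of_le zero_le_one]; exact hF's τ hτ0
    have hint2 : IntervalIntegrable (fun x => c * (Real.exp (c * x) * w x τ ^ 2))
        MeasureTheory.volume 0 1 := by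
      apply ContinuousOn.intervalIntegrable
      rw [Set.uIcc_of_le zero_le_one]
      exact continuousOn_const.mul (hFs τ hτ0)
    have hFTC := intervalIntegral.integral_eq_sub_of_hasDeriv_right_of_le
      (f := fun x => Real.exp (c * x) * w x τ ^ 2)
      (f' := fun x => Real.exp (c * x) * (2 * w x τ * wt x τ)
        + c * (Real.exp (c * x) * w x τ ^ 2))
      zero_le_one (hFs τ hτ0) ?_ (hint1.add hint2)
    · rw [intervalIntegral.integral_add hint1 hint2,
        intervalIntegral.integral_const_mul] at hFTC
      simp only [mul_one, mul_zero, Real.exp_zero, one_mul] at hFTC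
      rw [hV]
      linarith [hFTC]
    · intro x hx
      have hp := hpde x hx τ hτ.1
      have hd1 : HasDerivAt (fun y : ℝ => Real.exp (c * y)) (c * Real.exp (c * x)) x := by
        have := ((hasDerivAt_id x).const_mul c).exp
        simpa [mul_comm] using this
      have hd2 : HasDerivAt (fun y => w y τ ^ 2) (2 * w x τ * wx x τ) x := by
        have := hp.2.1.pow 2
        have heq : ((2:ℕ):ℝ) * w x τ ^ (2-1) * wx x τ = 2 * w x τ * wx x τ := by
          push_cast; ring
        rwa [heq] at this
      have hmul := hd1.fun_mul hd2
      refine HasDerivAt.hasDerivWithinAt ?_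
      exact hmul.congr_deriv (by rw [hp.2.2]; ring)
  -- Lyapunov function G
  set K : ℝ := Real.exp c * M / c with hK
  have hK0 : 0 ≤ K := div_nonneg (mul_nonneg (Real.exp_pos c).le hM0) hc.le
  set G : ℝ → ℝ := fun τ => Real.exp (c * τ) * (V τ - K) with hG
  have hGd : ∀ τ ∈ Set.Ioo (0:ℝ) t, HasDerivAt G
      (Real.exp (c * τ) * ((∫ x in (0:ℝ)..1, Real.exp (c * x) * (2 * w x τ * wt x τ))
        + c * (V τ - K))) τ := by
    intro τ hτ
    have h1 : HasDerivAt (fun τ : ℝ => Real.exp (c * τ)) (c * Real.exp (c * τ)) τ := by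
      have := ((hasDerivAt_id τ).const_mul c).exp
      simpa [mul_comm] using this
    have h2 : HasDerivAt (fun τ => V τ - K)
        (∫ x in (0:ℝ)..1, Real.exp (c * x) * (2 * w x τ * wt x τ)) τ :=
      (hVderiv τ hτ).sub_const K
    have := h1.fun_mul h2
    rw [hG]
    exact this.congr_deriv (by ring)
  have hGd0 : ∀ τ ∈ Set.Ioo (0:ℝ) t, deriv G τ ≤ 0 := by
    intro τ hτ
    rw [(hGd τ hτ).deriv]
    have hkey' := hkey τ hτ
    have hw1M : w 1 τ ^ 2 ≤ M := hMb τ ⟨hτ.1.le, hτ.2.le⟩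
    have hcK : c * K = Real.exp c * M := by
      rw [hK]; field_simp
    have hin : (∫ x in (0:ℝ)..1, Real.exp (c * x) * (2 * w x τ * wt x τ))
        + c * (V τ - K) ≤ 0 := by
      nlinarith [sq_nonneg (w 0 τ), Real.exp_pos c]
    have := mul_le_mul_of_nonneg_left hin (Real.exp_pos (c * τ)).le
    simpa using this
  have hGanti : AntitoneOn G (Set.Icc 0 t) := by
    apply antitoneOn_of_deriv_nonpos (convex_Icc 0 t)
    · rw [hG]
      exact (Real.continuous_exp.comp (continuous_const.mul continuous_id)).continuousOn.mul
        (hVcont.sub continuousOn_const)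
    · rw [interior_Icc]
      exact fun τ hτ => (hGd τ hτ).differentiableAt.differentiableWithinAt
    · rw [interior_Icc]
      exact hGd0
  have hfin := hGanti (Set.left_mem_Icc.mpr ht) (Set.right_mem_Icc.mpr ht) ht
  rw [hG] at hfin
  simp only [mul_zero, Real.exp_zero, one_mul] at hfin
  -- conclude
  have hE : Real.exp (-c * t) * Real.exp (c * t) = 1 := by
    rw [← Real.exp_add]; ring_nf; exact Real.exp_zero
  have hKeq : Real.exp c / c * M = K := by rw [hK]; ring
  rw [hKeq]
  have h1 := mul_le_mul_of_nonneg_left hfin (Real.exp_pos (-c * t)).le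
  rw [← mul_assoc, hE, one_mul] at h1
  nlinarith [h1, mul_nonneg (Real.exp_pos (-c * t)).le hK0]
end

section
/- (Semiglobal practical exponential stability under approximate feedback.) Let B_β > 0 and c > 0, let β : [0,1] → ℝ be continuous with ‖β‖_∞ ≤ B_β, and let k be the continuous solution of the backstepping kernel equation k(x) = −β(x) + ∫₀ˣ β(x−y) k(y) dy. Suppose u : [0,1] × [0,∞) → ℝ is a continuously differentiable solution of u_t(x,t) = u_x(x,t) + β(x) u(0,t) for x ∈ (0,1), t > 0, with boundary value u(1,t) = U(t), where the input U : [0,∞) → ℝ satisfies |U(t) − ∫₀¹ k(1−y) u(y,t) dy| ≤ ε for all t ≥ 0 and some ε > 0. Then for all t ≥ 0, ‖u(·,t)‖ ≤ (1 + B_β)(1 + B_β e^{B_β}) e^{c/2} e^{−ct/2} ‖u(·,0)‖ + (1 + B_β) (e^{c/2}/√c) ε, where ‖·‖ is the L²(0,1) norm. -/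
open MeasureTheory

/-- L²(0,1) norm -/
noncomputable def l2Norm (f : ℝ → ℝ) : ℝ := Real.sqrt (∫ x in (0:ℝ)..1, f x ^ 2)

lemma l2Norm_nonneg (f : ℝ → ℝ) : 0 ≤ l2Norm f := Real.sqrt_nonneg _

lemma sq_l2Norm (f : ℝ → ℝ) (hf : Continuous f) : l2Norm f ^ 2 = ∫ x in (0:ℝ)..1, f x ^ 2 := by
  rw [l2Norm, Real.sq_sqrt]
  apply intervalIntegral.integral_nonneg (by norm_num)
  intro x _; positivity

/-- Cauchy–Schwarz against the constant 1. -/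
lemma abs_integral_le_l2 (f : ℝ → ℝ) (hf : Continuous f) :
    (∫ x in (0:ℝ)..1, |f x|) ≤ l2Norm f := by
  set a : ℝ := ∫ x in (0:ℝ)..1, |f x| with ha
  have ha0 : 0 ≤ a := intervalIntegral.integral_nonneg (by norm_num) (fun x _ => abs_nonneg _)
  have h1 : (0:ℝ) ≤ ∫ x in (0:ℝ)..1, (|f x| - a) ^ 2 :=
    intervalIntegral.integral_nonneg (by norm_num) (fun x _ => sq_nonneg _)
  have h2 : (∫ x in (0:ℝ)..1, (|f x| - a) ^ 2)
      = (∫ x in (0:ℝ)..1, f x ^ 2) - a ^ 2 := by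
    have e : ∀ x : ℝ, (|f x| - a) ^ 2 = f x ^ 2 - 2 * a * |f x| + a ^ 2 := by
      intro x; rw [sub_sq]; rw [sq_abs]; ring
    simp only [e]
    rw [intervalIntegral.integral_add (f := fun x => f x ^ 2 - 2 * a * |f x|) (g := fun _ => a ^ 2) (((hf.pow 2).sub ((continuous_const.mul hf.abs))).intervalIntegrable _ _) (intervalIntegrable_const),
      intervalIntegral.integral_sub (f := fun x => f x ^ 2) (g := fun x => 2 * a * |f x|) ((hf.pow 2).intervalIntegrable _ _) ((continuous_const.mul hf.abs).intervalIntegrable _ _),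
      intervalIntegral.integral_const_mul]
    simp [← ha]
    ring
  have h3 : a ^ 2 ≤ ∫ x in (0:ℝ)..1, f x ^ 2 := by linarith
  calc a = Real.sqrt (a ^ 2) := by rw [Real.sqrt_sq ha0]
    _ ≤ l2Norm f := Real.sqrt_le_sqrt h3

/-- pointwise bound |g| ≤ |f| + C gives L² bound. -/
lemma l2Norm_le_of_pointwise (f g : ℝ → ℝ) (C : ℝ) (hf : Continuous f) (hg : Continuous g)
    (hC : 0 ≤ C) (h : ∀ x ∈ Set.Icc (0:ℝ) 1, |g x| ≤ |f x| + C) :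
    l2Norm g ≤ l2Norm f + C := by
  have key : (∫ x in (0:ℝ)..1, g x ^ 2) ≤ (l2Norm f + C) ^ 2 := by
    have h1 : (∫ x in (0:ℝ)..1, g x ^ 2) ≤ ∫ x in (0:ℝ)..1, (f x ^ 2 + (2 * C) * |f x| + C ^ 2) := by
      apply intervalIntegral.integral_mono_on (by norm_num)
        ((hg.pow 2).intervalIntegrable _ _)
        ((((hf.pow 2).add ((continuous_const.mul hf.abs))).add continuous_const).intervalIntegrable _ _)
      intro x hx
      have h1 := h x hx
      have h2 : g x ^ 2 ≤ (|f x| + C) ^ 2 := by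
        rw [← sq_abs (g x)]
        exact pow_le_pow_left₀ (abs_nonneg _) h1 2
      have h3 : (|f x| + C) ^ 2 = f x ^ 2 + 2 * C * |f x| + C ^ 2 := by
        rw [add_sq, sq_abs]; ring
      show g x ^ 2 ≤ f x ^ 2 + 2 * C * |f x| + C ^ 2; linarith
    have h2 : (∫ x in (0:ℝ)..1, (f x ^ 2 + (2 * C) * |f x| + C ^ 2))
        = (∫ x in (0:ℝ)..1, f x ^ 2) + (2 * C) * (∫ x in (0:ℝ)..1, |f x|) + C ^ 2 := by
      rw [intervalIntegral.integral_add (f := fun x => f x ^ 2 + 2 * C * |f x|) (g := fun _ => C ^ 2) (((hf.pow 2).add ((continuous_const.mul hf.abs))).intervalIntegrable _ _) intervalIntegrable_const,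
        intervalIntegral.integral_add (f := fun x => f x ^ 2) (g := fun x => 2 * C * |f x|) ((hf.pow 2).intervalIntegrable _ _) ((continuous_const.mul hf.abs).intervalIntegrable _ _),
        intervalIntegral.integral_const_mul]
      simp
    have h3 := abs_integral_le_l2 f hf
    have h4 : (∫ x in (0:ℝ)..1, f x ^ 2) = l2Norm f ^ 2 := (sq_l2Norm f hf).symm
    have h5 : 0 ≤ l2Norm f := l2Norm_nonneg f
    nlinarith
  calc l2Norm g = Real.sqrt (∫ x in (0:ℝ)..1, g x ^ 2) := rfl
    _ ≤ Real.sqrt ((l2Norm f + C) ^ 2) := Real.sqrt_le_sqrt key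
    _ = l2Norm f + C := Real.sqrt_sq (by have := l2Norm_nonneg f; positivity)

lemma sqrt_add_le (a b : ℝ) (ha : 0 ≤ a) (hb : 0 ≤ b) :
    Real.sqrt (a + b) ≤ Real.sqrt a + Real.sqrt b := by
  have h : a + b ≤ (Real.sqrt a + Real.sqrt b) ^ 2 := by
    have := Real.sq_sqrt ha; have := Real.sq_sqrt hb
    nlinarith [Real.sqrt_nonneg a, Real.sqrt_nonneg b]
  calc Real.sqrt (a + b) ≤ Real.sqrt ((Real.sqrt a + Real.sqrt b) ^ 2) := Real.sqrt_le_sqrt h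
    _ = _ := Real.sqrt_sq (by positivity)

/-- bound of a continuous function on a compact set of the plane -/
lemma exists_bound_prod (g : ℝ × ℝ → ℝ) (hg : Continuous g) (K : Set (ℝ × ℝ)) (hK : IsCompact K) :
    ∃ M : ℝ, 0 ≤ M ∧ ∀ p ∈ K, |g p| ≤ M := by
  obtain ⟨M, hM⟩ := (hK.image (hg.abs)).bddAbove
  refine ⟨max M 0, le_max_right _ _, fun p hp => ?_⟩
  exact le_trans (hM (Set.mem_image_of_mem _ hp)) (le_max_left _ _)


lemma hasDerivAt_shift (g : ℝ → ℝ) (d s₀ : ℝ)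
    (h : HasDerivAt (fun σ => g (s₀ + σ)) d 0) : HasDerivAt g d s₀ := by
  have hi : HasDerivAt (fun s : ℝ => s - s₀) 1 s₀ := (hasDerivAt_id s₀).sub_const s₀
  have h' : HasDerivAt (fun σ => g (s₀ + σ)) d ((fun s : ℝ => s - s₀) s₀) := by simpa using h
  have h2 : HasDerivAt ((fun σ => g (s₀ + σ)) ∘ (fun s : ℝ => s - s₀)) (d * 1) s₀ :=
    HasDerivAt.comp (h := fun s : ℝ => s - s₀) (h₂ := fun σ => g (s₀ + σ)) s₀ h' hi
  have he : ((fun σ => g (s₀ + σ)) ∘ (fun s : ℝ => s - s₀)) = g := by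
    funext s; simp only [Function.comp]; congr 1; ring
  rw [he] at h2
  simpa using h2

/-- Directional derivative from partial derivatives: the x-partial exists near the point and is
continuous there; the t-partial exists at the point. -/
lemma hasDerivAt_line (f fx : ℝ → ℝ → ℝ) (p q a b dq : ℝ)
    (hfx : ∀ᶠ z : ℝ × ℝ in nhds (p, q), HasDerivAt (fun x => f x z.2) (fx z.1 z.2) z.1)
    (hfxc : ContinuousAt (fun z : ℝ × ℝ => fx z.1 z.2) (p, q))
    (hft : HasDerivAt (fun t => f p t) dq q) :
    HasDerivAt (fun s => f (p + a * s) (q + b * s)) (a * fx p q + b * dq) 0 := by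
  have hi : HasDerivAt (fun s : ℝ => q + b * s) b 0 := by
    simpa using ((hasDerivAt_id (0:ℝ)).const_mul b).const_add q
  have hft' : HasDerivAt (fun t => f p t) dq (q + b * 0) := by simpa using hft
  have h₂ : HasDerivAt (fun s => f p (q + b * s)) (b * dq) 0 := by
    have := hft'.comp 0 hi
    simpa [mul_comm, Function.comp_def] using this
  have h₁ : HasDerivAt (fun s => f (p + a * s) (q + b * s) - f p (q + b * s)) (a * fx p q) 0 := by
    rcases eq_or_ne a 0 with rfl | ha
    · simpa using hasDerivAt_const (0:ℝ) (0:ℝ)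
    · rw [hasDerivAt_iff_tendsto_slope]
      rw [Metric.tendsto_nhdsWithin_nhds]
      intro ε hε
      obtain ⟨r, hr, hball⟩ := Metric.eventually_nhds_iff.mp hfx
      obtain ⟨δ₁, hδ₁, hcont⟩ := Metric.continuousAt_iff.mp hfxc (ε / (|a| + 1))
        (by positivity)
      refine ⟨min r δ₁ / (|a| + |b| + 1), by positivity, ?_⟩
      intro s hs hsd
      simp only [Set.mem_compl_iff, Set.mem_singleton_iff] at hs
      set τ := q + b * s with hτ
      have habs : 0 < |a| := abs_pos.mpr ha
      have hsδ : (|a| + |b|) * |s| < min r δ₁ := by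
        rw [Real.dist_eq, sub_zero] at hsd
        have h1 : 0 < |a| + |b| + 1 := by positivity
        calc (|a| + |b|) * |s| < (|a| + |b| + 1) * |s| := by
              apply mul_lt_mul_of_pos_right _ (abs_pos.mpr hs); linarith
          _ < (|a| + |b| + 1) * (min r δ₁ / (|a| + |b| + 1)) := by
              apply mul_lt_mul_of_pos_left hsd h1
          _ = min r δ₁ := by field_simp
      have hdist : ∀ ξ : ℝ, |ξ - p| ≤ |a * s| → dist (ξ, τ) (p, q) < min r δ₁ := by
        intro ξ hξ
        rw [Prod.dist_eq]
        apply max_lt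
        · rw [Real.dist_eq]
          calc |ξ - p| ≤ |a * s| := hξ
            _ = |a| * |s| := abs_mul _ _
            _ ≤ (|a| + |b|) * |s| := by apply mul_le_mul_of_nonneg_right _ (abs_nonneg s); simp [abs_nonneg]
            _ < min r δ₁ := hsδ
        · rw [Real.dist_eq, hτ]
          have : |q + b * s - q| = |b| * |s| := by rw [add_sub_cancel_left, abs_mul]
          rw [this]
          calc |b| * |s| ≤ (|a| + |b|) * |s| := by apply mul_le_mul_of_nonneg_right _ (abs_nonneg s); simp [abs_nonneg]
            _ < min r δ₁ := hsδ
      -- MVT on the segment from p to p + a*s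
      have hd : ∀ ξ : ℝ, |ξ - p| ≤ |a * s| → HasDerivAt (fun x => f x τ) (fx ξ τ) ξ := by
        intro ξ hξ
        exact hball (y := (ξ, τ)) (lt_of_lt_of_le (hdist ξ hξ) (min_le_left _ _))
      have has : a * s ≠ 0 := mul_ne_zero ha hs
      obtain ⟨ξ, hξmem, hξ⟩ : ∃ ξ : ℝ, |ξ - p| ≤ |a * s| ∧
          fx ξ τ = (f (p + a * s) τ - f p τ) / (a * s) := by
        rcases lt_or_gt_of_ne has with hneg | hpos
        · -- a * s < 0 : p + a*s < p
          have hlt : p + a * s < p := by linarith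
          obtain ⟨ξ, hξI, hξeq⟩ := exists_hasDerivAt_eq_slope (fun x => f x τ) (fun x => fx x τ)
            hlt (fun x hx => (hd x (by
              rw [abs_of_nonpos (le_of_lt hneg)]
              rcases Set.mem_Icc.mp hx with ⟨h1, h2⟩
              rw [abs_le]; constructor <;> linarith)).continuousAt.continuousWithinAt)
            (fun x hx => hd x (by
              rw [abs_of_nonpos (le_of_lt hneg)]
              rcases Set.mem_Ioo.mp hx with ⟨h1, h2⟩
              rw [abs_le]; constructor <;> linarith))
          refine ⟨ξ, by
            rw [abs_of_nonpos (le_of_lt hneg)]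
            rcases Set.mem_Ioo.mp hξI with ⟨h1, h2⟩
            rw [abs_le]; constructor <;> linarith, ?_⟩
          rw [hξeq]
          rw [div_eq_div_iff (by linarith) has]
          ring
        · have hlt : p < p + a * s := by linarith
          obtain ⟨ξ, hξI, hξeq⟩ := exists_hasDerivAt_eq_slope (fun x => f x τ) (fun x => fx x τ)
            hlt (fun x hx => (hd x (by
              rw [abs_of_pos hpos]
              rcases Set.mem_Icc.mp hx with ⟨h1, h2⟩
              rw [abs_le]; constructor <;> linarith)).continuousAt.continuousWithinAt)
            (fun x hx => hd x (by
              rw [abs_of_pos hpos]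
              rcases Set.mem_Ioo.mp hx with ⟨h1, h2⟩
              rw [abs_le]; constructor <;> linarith))
          refine ⟨ξ, by
            rw [abs_of_pos hpos]
            rcases Set.mem_Ioo.mp hξI with ⟨h1, h2⟩
            rw [abs_le]; constructor <;> linarith, ?_⟩
          rw [hξeq]
          congr 1
          abel
      -- compute the slope
      have hslope : slope (fun s => f (p + a * s) (q + b * s) - f p (q + b * s)) 0 s
          = a * fx ξ τ := by
        rw [slope_def_field]
        simp only [mul_zero, add_zero, sub_self, sub_zero]
        rw [hξ]
        field_simp
        rw [hτ]; ring
      rw [hslope]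
      have h5 := hcont (x := (ξ, τ)) (lt_of_lt_of_le (hdist ξ hξmem) (min_le_right _ _))
      simp only [Real.dist_eq] at h5 ⊢
      have he : a * fx ξ τ - a * fx p q = a * (fx ξ τ - fx p q) := by ring
      rw [he, abs_mul]
      have h6 : |a| * |fx ξ τ - fx p q| < |a| * (ε / (|a| + 1)) :=
        mul_lt_mul_of_pos_left h5 habs
      have h7 : |a| * (ε / (|a| + 1)) < ε := by
        rw [mul_div_assoc', div_lt_iff₀ (by positivity : (0:ℝ) < |a| + 1)]
        nlinarith
      linarith
  have := h₁.add h₂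
  simpa [Pi.add_def] using this


lemma hasDerivAt_primitive (φ : ℝ → ℝ) (hφ : Continuous φ) (x : ℝ) :
    HasDerivAt (fun a => ∫ z in (0:ℝ)..a, φ z) (φ x) x :=
  intervalIntegral.integral_hasDerivAt_right (hφ.intervalIntegrable _ _)
    (hφ.stronglyMeasurableAtFilter _ _) hφ.continuousAt

/-- a function which is clamped outside `[0,1]` and has a bounded derivative inside is
globally Lipschitz. -/
lemma lipschitz_clamp (v d : ℝ → ℝ) (M : ℝ)
    (hv : Continuous v) (hd : Continuous d)
    (hderiv : ∀ ξ ∈ Set.Ioo (0:ℝ) 1, HasDerivAt v (d ξ) ξ)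
    (hbd : ∀ ξ ∈ Set.Icc (0:ℝ) 1, |d ξ| ≤ M)
    (hlo : ∀ ξ ≤ (0:ℝ), v ξ = v 0) (hhi : ∀ ξ ≥ (1:ℝ), v ξ = v 1) :
    ∀ σ₁ σ₂ : ℝ, |v σ₂ - v σ₁| ≤ M * |σ₂ - σ₁| := by
  have hM : 0 ≤ M := le_trans (abs_nonneg _) (hbd 0 (by norm_num))
  have key : ∀ a b : ℝ, 0 ≤ a → a ≤ b → b ≤ 1 → |v b - v a| ≤ M * (b - a) := by
    intro a b ha hab hb
    have hftc := intervalIntegral.integral_eq_sub_of_hasDeriv_right_of_le hab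
      (hv.continuousOn) (fun x hx => (hderiv x ⟨lt_of_le_of_lt ha hx.1,
        lt_of_lt_of_le hx.2 hb⟩).hasDerivWithinAt) (hd.intervalIntegrable a b)
    rw [← hftc]
    have := intervalIntegral.norm_integral_le_of_norm_le_const (C := M)
      (f := d) (a := a) (b := b) (fun x hx => by
        rw [Set.uIoc_of_le hab] at hx
        exact hbd x ⟨le_of_lt (lt_of_le_of_lt ha hx.1), le_trans hx.2 hb⟩)
    rw [Real.norm_eq_abs] at this
    calc |∫ y in a..b, d y| ≤ M * |b - a| := this
      _ = M * (b - a) := by rw [abs_of_nonneg (by linarith)]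
  -- clamping
  set cl : ℝ → ℝ := fun σ => max 0 (min 1 σ) with hcl
  have hclmem : ∀ σ, 0 ≤ cl σ ∧ cl σ ≤ 1 := by
    intro σ
    refine ⟨le_max_left _ _, ?_⟩
    apply max_le (by norm_num) (min_le_left _ _)
  have hvcl : ∀ σ, v σ = v (cl σ) := by
    intro σ
    rcases le_total σ 0 with h0 | h0
    · rw [hlo σ h0]
      have : cl σ = 0 := by
        simp only [hcl]
        rw [max_eq_left]
        exact le_trans (min_le_right _ _) h0
      rw [this]
    · rcases le_total σ 1 with h1 | h1
      · have : cl σ = σ := by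
          simp only [hcl]
          rw [min_eq_right h1, max_eq_right h0]
        rw [this]
      · rw [hhi σ h1]
        have : cl σ = 1 := by
          simp only [hcl]
          rw [min_eq_left h1, max_eq_right]; norm_num
        rw [this]
  have hcll : ∀ σ₁ σ₂ : ℝ, |cl σ₂ - cl σ₁| ≤ |σ₂ - σ₁| := by
    intro σ₁ σ₂
    have h1 : |min 1 σ₂ - min 1 σ₁| ≤ |σ₂ - σ₁| := by
      have := abs_min_sub_min_le_max (1:ℝ) σ₂ 1 σ₁
      simpa using this
    have h2 : |cl σ₂ - cl σ₁| ≤ |min 1 σ₂ - min 1 σ₁| := by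
      have := abs_max_sub_max_le_max (0:ℝ) (min 1 σ₂) 0 (min 1 σ₁)
      simp only [hcl]
      simpa [max_comm] using this
    exact le_trans h2 h1
  intro σ₁ σ₂
  rw [hvcl σ₁, hvcl σ₂]
  have h2 : |v (cl σ₂) - v (cl σ₁)| ≤ M * |cl σ₂ - cl σ₁| := by
    rcases le_total (cl σ₁) (cl σ₂) with h | h
    · have := key (cl σ₁) (cl σ₂) (hclmem σ₁).1 h (hclmem σ₂).2
      calc |v (cl σ₂) - v (cl σ₁)| ≤ M * (cl σ₂ - cl σ₁) := this
        _ = M * |cl σ₂ - cl σ₁| := by rw [abs_of_nonneg (by linarith)]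
    · have := key (cl σ₂) (cl σ₁) (hclmem σ₂).1 h (hclmem σ₁).2
      rw [abs_sub_comm]
      calc |v (cl σ₁) - v (cl σ₂)| ≤ M * (cl σ₁ - cl σ₂) := this
        _ = M * |cl σ₂ - cl σ₁| := by rw [abs_sub_comm, abs_of_nonneg (by linarith)]
  exact le_trans h2 (mul_le_mul_of_nonneg_left (hcll σ₁ σ₂) hM)

/-- sup bound for the solution of the kernel (Volterra) equation. -/
lemma volterra_bound (f g : ℝ → ℝ) (B : ℝ) (hB : 0 < B)
    (hf : Continuous f) (hg : Continuous g)
    (hfB : ∀ x ∈ Set.Icc (0:ℝ) 1, |f x| ≤ B)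
    (heq : ∀ x ∈ Set.Icc (0:ℝ) 1, g x = -f x + ∫ y in (0:ℝ)..x, f (x - y) * g y) :
    ∀ x ∈ Set.Icc (0:ℝ) 1, |g x| ≤ B * Real.exp B := by
  set F : ℝ → ℝ := fun x => ∫ y in (0:ℝ)..x, |g y| with hFdef
  have hF : ∀ x : ℝ, HasDerivAt F (|g x|) x := fun x => hasDerivAt_primitive _ hg.abs x
  have hFc : Continuous F := by
    apply continuous_iff_continuousAt.mpr
    intro x; exact (hF x).continuousAt
  have hF0 : ∀ x ∈ Set.Icc (0:ℝ) 1, 0 ≤ F x := by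
    intro x hx
    exact intervalIntegral.integral_nonneg hx.1 (fun y _ => abs_nonneg _)
  have key : ∀ x ∈ Set.Icc (0:ℝ) 1, |g x| ≤ B + B * F x := by
    intro x hx
    rw [heq x hx]
    have h1 : |∫ y in (0:ℝ)..x, f (x - y) * g y| ≤ ∫ y in (0:ℝ)..x, B * |g y| := by
      have h2 : |∫ y in (0:ℝ)..x, f (x - y) * g y| ≤ ∫ y in (0:ℝ)..x, |f (x - y) * g y| :=
        intervalIntegral.abs_integral_le_integral_abs hx.1
      apply le_trans h2
      apply intervalIntegral.integral_mono_on hx.1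
      · exact ((hf.comp (continuous_const.sub continuous_id)).mul hg).abs.intervalIntegrable _ _
      · exact (continuous_const.mul hg.abs).intervalIntegrable _ _
      · intro y hy
        rw [abs_mul]
        apply mul_le_mul_of_nonneg_right _ (abs_nonneg _)
        exact hfB (x - y) ⟨by linarith [hy.1, hy.2, hx.1, hx.2], by linarith [hy.1, hy.2, hx.1, hx.2]⟩
    calc |(-f x + ∫ y in (0:ℝ)..x, f (x - y) * g y)|
        ≤ |(-f x)| + |∫ y in (0:ℝ)..x, f (x - y) * g y| := abs_add_le _ _
      _ = |f x| + |∫ y in (0:ℝ)..x, f (x - y) * g y| := by rw [abs_neg]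
      _ ≤ B + B * F x := by
          rw [intervalIntegral.integral_const_mul] at h1
          exact add_le_add (hfB x hx) h1
  -- Gronwall step
  set G : ℝ → ℝ := fun x => Real.exp (-B * x) * (F x + 1) with hGdef
  have hG : ∀ x : ℝ, HasDerivAt G
      ((Real.exp (-B * x) * (-B)) * (F x + 1) + Real.exp (-B * x) * |g x|) x := by
    intro x
    have h1 : HasDerivAt (fun x : ℝ => -B * x) (-B) x := by
      simpa using (hasDerivAt_id x).const_mul (-B)
    have h2 : HasDerivAt (fun x : ℝ => Real.exp (-B * x)) (Real.exp (-B * x) * (-B)) x := h1.exp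
    exact h2.mul ((hF x).add_const 1)
  have hGc : Continuous G := by
    apply continuous_iff_continuousAt.mpr
    intro x; exact (hG x).continuousAt
  have hanti : AntitoneOn G (Set.Icc 0 1) := by
    apply antitoneOn_of_deriv_nonpos (convex_Icc 0 1) hGc.continuousOn
    · intro x hx
      exact (hG x).differentiableAt.differentiableWithinAt
    · intro x hx
      rw [interior_Icc] at hx
      rw [(hG x).deriv]
      have hxI : x ∈ Set.Icc (0:ℝ) 1 := ⟨le_of_lt hx.1, le_of_lt hx.2⟩
      have h3 := key x hxI
      have h4 := Real.exp_pos (-B * x)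
      nlinarith [hF0 x hxI]
  intro x hx
  have hGx : G x ≤ G 0 := hanti (by norm_num) hx hx.1
  have hG0 : G 0 = 1 := by
    simp only [hGdef, hFdef]
    norm_num
  have hexp : Real.exp (-B * x) * Real.exp (B * x) = 1 := by
    rw [← Real.exp_add]; ring_nf; exact Real.exp_zero
  have h7 : F x + 1 ≤ Real.exp (B * x) := by
    rw [hG0] at hGx
    simp only [hGdef] at hGx
    nlinarith [mul_le_mul_of_nonneg_left hGx (le_of_lt (Real.exp_pos (B * x))),
      Real.exp_pos (B * x)]
  have h8 : Real.exp (B * x) ≤ Real.exp B := Real.exp_le_exp.mpr (by nlinarith [hx.1, hx.2])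
  have h9 := key x hx
  nlinarith [hF0 x hx, Real.exp_pos B]


/-- Inverse backstepping transform: if `g` solves the kernel equation associated with `f`, then
the inverse of `v ↦ v - g ⋆ v` is `w ↦ w + (-f) ⋆ w`. -/
lemma inverse_transform (f g v : ℝ → ℝ) (hf : Continuous f) (hg : Continuous g)
    (hv : Continuous v)
    (hid : ∀ x ∈ Set.Icc (0:ℝ) 1, g x = -f x + ∫ y in (0:ℝ)..x, f (x - y) * g y) :
    ∀ x ∈ Set.Icc (0:ℝ) 1,
      (v x - ∫ z in (0:ℝ)..x, g z * v (x - z)) -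
        ∫ y in (0:ℝ)..x, f (x - y) * (v y - ∫ z in (0:ℝ)..y, g z * v (y - z)) = v x := by
  intro x hx
  obtain ⟨hx0, hx1⟩ := hx
  -- step A : rewrite inner convolutions
  have stepA : ∀ y : ℝ, (∫ z in (0:ℝ)..y, g z * v (y - z)) = ∫ w in (0:ℝ)..y, g (y - w) * v w := by
    intro y
    have := intervalIntegral.integral_comp_sub_left (a := (0:ℝ)) (b := y)
      (fun w => g (y - w) * v w) y
    simp only [sub_zero, sub_self] at this
    rw [← this]
    congr 1
    funext z
    congr 2
    ring
  -- the big Fubini step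
  set g2 : ℝ → ℝ → ℝ := fun y w => f (x - y) * (g (y - w) * v w) with hg2
  have hg2c : Continuous (fun p : ℝ × ℝ => g2 p.1 p.2) := by
    apply Continuous.mul
    · exact hf.comp (continuous_const.sub continuous_fst)
    · exact (hg.comp (continuous_fst.sub continuous_snd)).mul (hv.comp continuous_snd)
  obtain ⟨M, hM0, hM⟩ : ∃ M : ℝ, 0 ≤ M ∧ ∀ p ∈ Set.Icc (0:ℝ) x ×ˢ Set.Icc (0:ℝ) x,
      |g2 p.1 p.2| ≤ M := by
    obtain ⟨M, hM⟩ := ((isCompact_Icc.prod isCompact_Icc).image hg2c.abs).bddAbove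
    exact ⟨max M 0, le_max_right _ _, fun p hp =>
      le_trans (hM (Set.mem_image_of_mem _ hp)) (le_max_left _ _)⟩
  have fubini : (∫ y in (0:ℝ)..x, ∫ w in (0:ℝ)..y, g2 y w)
      = ∫ w in (0:ℝ)..x, ∫ y in w..x, g2 y w := by
    haveI : Fact (volume (Set.Ioc (0:ℝ) x) < ⊤) := ⟨measure_Ioc_lt_top⟩
    have hμ : True := trivial
    set μ := volume.restrict (Set.Ioc (0:ℝ) x)
    set Φ : ℝ → ℝ → ℝ := fun y w => (Set.Iic y).indicator (g2 y) w with hΦ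
    have hmeasΦ : AEStronglyMeasurable (Function.uncurry Φ) (μ.prod μ) := by
      have h1 : Function.uncurry Φ =
          Set.indicator {p : ℝ × ℝ | p.2 ≤ p.1} (fun p => g2 p.1 p.2) := by
        funext p
        simp only [Function.uncurry, hΦ, Set.indicator_apply, Set.mem_Iic, Set.mem_setOf_eq]
      rw [h1]
      apply StronglyMeasurable.aestronglyMeasurable
      exact (hg2c.stronglyMeasurable).indicator
        ((isClosed_le continuous_snd continuous_fst).measurableSet)
    have hint : Integrable (Function.uncurry Φ) (μ.prod μ) := by
      apply Integrable.mono' (integrable_const M) hmeasΦ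
      show ∀ᵐ p ∂(μ.prod μ), ‖Function.uncurry Φ p‖ ≤ M
      rw [show (μ.prod μ : Measure (ℝ × ℝ))
        = (volume.prod volume).restrict (Set.Ioc 0 x ×ˢ Set.Ioc 0 x) from Measure.prod_restrict _ _]
      rw [ae_restrict_iff' (measurableSet_Ioc.prod measurableSet_Ioc)]
      apply ae_of_all
      rintro ⟨y, w⟩ ⟨hy, hw⟩
      simp only [Function.uncurry, hΦ, Set.indicator_apply]
      have hb := hM (y, w) ⟨⟨le_of_lt hy.1, hy.2⟩, ⟨le_of_lt hw.1, hw.2⟩⟩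
      split
      · simpa using hb
      · simpa using hM0
    have swap := integral_integral_swap hint
    -- convert LHS
    have lhs : (∫ y in (0:ℝ)..x, ∫ w in (0:ℝ)..y, g2 y w) = ∫ y, (∫ w, Φ y w ∂μ) ∂μ := by
      rw [intervalIntegral.integral_of_le hx0]
      apply setIntegral_congr_fun measurableSet_Ioc
      intro y hy
      dsimp only
      have inner1 : (∫ w, Φ y w ∂μ) = ∫ w in Set.Ioc (0:ℝ) y, g2 y w := by
        have e : (∫ w, Φ y w ∂μ) = ∫ w in Set.Ioc (0:ℝ) x, (Set.Iic y).indicator (g2 y) w := rfl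
        rw [e, setIntegral_indicator measurableSet_Iic, Set.Ioc_inter_Iic,
          min_eq_right hy.2]
      rw [inner1, intervalIntegral.integral_of_le (le_of_lt hy.1)]
    have rhs : (∫ w, (∫ y, Φ y w ∂μ) ∂μ) = ∫ w in (0:ℝ)..x, ∫ y in w..x, g2 y w := by
      rw [intervalIntegral.integral_of_le hx0]
      show (∫ w, (∫ y, Φ y w ∂μ) ∂μ) = _
      apply setIntegral_congr_fun measurableSet_Ioc
      intro w hw
      dsimp only
      have h2 : ∀ y, Φ y w = (Set.Ici w).indicator (fun y => g2 y w) y := by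
        intro y
        simp only [hΦ, Set.indicator_apply, Set.mem_Iic, Set.mem_Ici]
      simp only [h2]
      rw [setIntegral_indicator measurableSet_Ici]
      have h3 : Set.Ioc 0 x ∩ Set.Ici w = Set.Icc w x := by
        ext y
        simp only [Set.mem_inter_iff, Set.mem_Ioc, Set.mem_Ici, Set.mem_Icc]
        constructor
        · rintro ⟨⟨_, h2⟩, h3⟩; exact ⟨h3, h2⟩
        · rintro ⟨h1, h2⟩; exact ⟨⟨lt_of_lt_of_le hw.1 h1, h2⟩, h1⟩
      rw [h3, integral_Icc_eq_integral_Ioc, ← intervalIntegral.integral_of_le hw.2]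
    rw [lhs, swap, rhs]
  -- inner kernel identity
  have inner_id : ∀ w ∈ Set.Icc (0:ℝ) x,
      (∫ y in w..x, g2 y w) = (g (x - w) + f (x - w)) * v w := by
    intro w hw
    have h1 : (∫ y in w..x, g2 y w) = (∫ s in (0:ℝ)..(x - w), f (x - w - s) * g s) * v w := by
      have h2 := intervalIntegral.integral_comp_add_right (a := (0:ℝ)) (b := x - w)
        (fun y => g2 y w) w
      simp only [zero_add, sub_add_cancel] at h2
      rw [← h2]
      rw [← intervalIntegral.integral_mul_const]
      congr 1
      funext s
      simp only [hg2]
      ring_nf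
    rw [h1]
    have h4 := hid (x - w) ⟨by linarith [hw.1, hw.2], by linarith [hw.1, hw.2, hx1]⟩
    have h5 : (∫ s in (0:ℝ)..(x - w), f (x - w - s) * g s) = g (x - w) + f (x - w) := by
      have : ∀ s, f (x - w - s) = f ((x - w) - s) := by intro s; ring_nf
      rw [show (∫ s in (0:ℝ)..(x - w), f (x - w - s) * g s)
          = ∫ s in (0:ℝ)..(x - w), f ((x - w) - s) * g s from rfl]
      linarith [h4]
    rw [h5]
  -- assemble
  have hJ : (∫ y in (0:ℝ)..x, f (x - y) * (∫ z in (0:ℝ)..y, g z * v (y - z)))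
      = (∫ w in (0:ℝ)..x, g (x - w) * v w) + ∫ w in (0:ℝ)..x, f (x - w) * v w := by
    have e1 : (∫ y in (0:ℝ)..x, f (x - y) * (∫ z in (0:ℝ)..y, g z * v (y - z)))
        = ∫ y in (0:ℝ)..x, ∫ w in (0:ℝ)..y, g2 y w := by
      apply intervalIntegral.integral_congr
      intro y hy
      dsimp only
      rw [stepA y, ← intervalIntegral.integral_const_mul]
    rw [e1, fubini]
    have e2 : (∫ w in (0:ℝ)..x, ∫ y in w..x, g2 y w)
        = ∫ w in (0:ℝ)..x, (g (x - w) * v w + f (x - w) * v w) := by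
      apply intervalIntegral.integral_congr
      intro w hw
      dsimp only
      rw [Set.uIcc_of_le hx0] at hw
      rw [inner_id w hw]
      ring
    rw [e2]
    rw [intervalIntegral.integral_add]
    · exact ((hg.comp (continuous_const.sub continuous_id)).mul hv).intervalIntegrable _ _
    · exact ((hf.comp (continuous_const.sub continuous_id)).mul hv).intervalIntegrable _ _
  -- final computation
  have expand : (∫ y in (0:ℝ)..x, f (x - y) * (v y - ∫ z in (0:ℝ)..y, g z * v (y - z)))
      = (∫ y in (0:ℝ)..x, f (x - y) * v y)
        - ∫ y in (0:ℝ)..x, f (x - y) * (∫ z in (0:ℝ)..y, g z * v (y - z)) := by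
    rw [← intervalIntegral.integral_sub]
    · congr 1; funext y; ring
    · exact ((hf.comp (continuous_const.sub continuous_id)).mul hv).intervalIntegrable _ _
    · -- integrability of y ↦ f (x-y) * ∫ ...
      apply Continuous.intervalIntegrable
      apply Continuous.mul (hf.comp (continuous_const.sub continuous_id))
      have : Continuous (fun y : ℝ => ∫ z in (0:ℝ)..y, g z * v (y - z)) := by
        apply intervalIntegral.continuous_parametric_intervalIntegral_of_continuous
          (f := fun y z => g z * v (y - z)) (s := id)
        · exact (hg.comp continuous_snd).mul (hv.comp (continuous_fst.sub continuous_snd))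
        · exact continuous_id
      exact this
  rw [expand, stepA x, hJ]
  ring

set_option maxHeartbeats 2000000 in
theorem core (Bβ c ε : ℝ) (hBβ : 0 < Bβ) (hc : 0 < c) (hε : 0 < ε)
    (β k : ℝ → ℝ) (u ut ux : ℝ → ℝ → ℝ)
    (hβ : Continuous β) (hk : Continuous k)
    (hu : Continuous (fun p : ℝ × ℝ => u p.1 p.2))
    (hut : Continuous (fun p : ℝ × ℝ => ut p.1 p.2))
    (hux : Continuous (fun p : ℝ × ℝ => ux p.1 p.2))
    (hβB : ∀ x, |β x| ≤ Bβ)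
    (hkeq : ∀ x ∈ Set.Icc (0:ℝ) 1, k x = -β x + ∫ y in (0:ℝ)..x, β (x - y) * k y)
    (hpde : ∀ x ∈ Set.Ioo (0:ℝ) 1, ∀ s > (0:ℝ),
      HasDerivAt (fun τ => u x τ) (ut x s) s ∧
      HasDerivAt (fun ξ => u ξ s) (ux x s) x ∧
      ut x s = ux x s + β x * u 0 s)
    (hlo : ∀ x ≤ (0:ℝ), ∀ s, u x s = u 0 s)
    (hhi : ∀ x ≥ (1:ℝ), ∀ s, u x s = u 1 s)
    (hbd : ∀ s ≥ (0:ℝ), |u 1 s - ∫ y in (0:ℝ)..1, k (1 - y) * u y s| ≤ ε) :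
    ∀ t ≥ (0:ℝ),
      l2Norm (fun x => u x t) ≤
        (1 + Bβ) * (1 + Bβ * Real.exp Bβ) * Real.exp (c / 2) * Real.exp (-c * t / 2) *
            l2Norm (fun x => u x 0) +
          (1 + Bβ) * (Real.exp (c / 2) / Real.sqrt c) * ε := by
  set BK := Bβ * Real.exp Bβ with hBKdef
  have hBK : 0 < BK := by positivity
  have hkB : ∀ x ∈ Set.Icc (0:ℝ) 1, |k x| ≤ BK :=
    volterra_bound β k Bβ hBβ hβ hk (fun x _ => hβB x) hkeq
  -- the backstepping transform
  set w : ℝ → ℝ → ℝ := fun x s => u x s - ∫ z in (0:ℝ)..x, k z * u (x - z) s with hwdef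
  have huc3 : Continuous (Function.uncurry (fun (p : ℝ × ℝ) z => k z * u (p.1 - z) p.2)) := by
    have : Continuous (fun q : (ℝ × ℝ) × ℝ => k q.2 * u (q.1.1 - q.2) q.1.2) := by
      apply Continuous.mul (hk.comp continuous_snd)
      exact hu.comp ((continuous_fst.fst.sub continuous_snd).prodMk continuous_fst.snd)
    exact this
  have hwc : Continuous (fun p : ℝ × ℝ => w p.1 p.2) := by
    apply Continuous.sub (by exact hu)
    exact intervalIntegral.continuous_parametric_intervalIntegral_of_continuous
      (f := fun (p : ℝ × ℝ) z => k z * u (p.1 - z) p.2) (s := fun p : ℝ × ℝ => p.1)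
      huc3 continuous_fst
  -- partial derivative candidates
  set Wt : ℝ → ℝ → ℝ := fun x s => ut x s - ∫ z in (0:ℝ)..x, k z * ut (x - z) s with hWtdef
  set Wx : ℝ → ℝ → ℝ := fun x s =>
    ux x s - (k x * u 0 s + ∫ z in (0:ℝ)..x, k z * ux (x - z) s) with hWxdef
  have hWxc : Continuous (fun p : ℝ × ℝ => Wx p.1 p.2) := by
    apply Continuous.sub (by exact hux)
    apply Continuous.add
    · exact (hk.comp continuous_fst).mul
        (hu.comp (continuous_const.prodMk continuous_snd))
    · apply intervalIntegral.continuous_parametric_intervalIntegral_of_continuous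
        (f := fun (p : ℝ × ℝ) z => k z * ux (p.1 - z) p.2) (s := fun p : ℝ × ℝ => p.1)
      · have : Continuous (fun q : (ℝ × ℝ) × ℝ => k q.2 * ux (q.1.1 - q.2) q.1.2) := by
          apply Continuous.mul (hk.comp continuous_snd)
          exact hux.comp ((continuous_fst.fst.sub continuous_snd).prodMk continuous_fst.snd)
        exact this
      · exact continuous_fst
  have hae_ne : ∀ x : ℝ, ∀ᵐ z : ℝ ∂volume, z ≠ x := by
    intro x
    refine MeasureTheory.ae_iff.mpr ?_
    simp [not_not]
  -- time derivative of w
  have hwt : ∀ x ∈ Set.Ioo (0:ℝ) 1, ∀ s > (0:ℝ),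
      HasDerivAt (fun τ => w x τ) (Wt x s) s := by
    intro x hx s hs
    obtain ⟨M1, hM10, hM1⟩ : ∃ M : ℝ, 0 ≤ M ∧
        ∀ p ∈ Set.Icc (0:ℝ) 1 ×ˢ Set.Icc (s/2) (3*s/2), |ut p.1 p.2| ≤ M := by
      obtain ⟨M, hM⟩ := ((isCompact_Icc.prod isCompact_Icc).image hut.abs).bddAbove
      exact ⟨max M 0, le_max_right _ _, fun p hp =>
        le_trans (hM (Set.mem_image_of_mem _ hp)) (le_max_left _ _)⟩
    have hleib := intervalIntegral.hasDerivAt_integral_of_dominated_loc_of_deriv_le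
      (F := fun τ z => k z * u (x - z) τ) (F' := fun τ z => k z * ut (x - z) τ)
      (x₀ := s) (a := 0) (b := x) (μ := volume) (bound := fun _ => BK * M1)
      (s := Metric.ball s (s/2)) (Metric.ball_mem_nhds _ (by positivity))
      (Filter.Eventually.of_forall (fun τ => Continuous.aestronglyMeasurable (by
        apply Continuous.mul hk
        exact hu.comp ((continuous_const.sub continuous_id).prodMk continuous_const))))
      (by
        apply Continuous.intervalIntegrable
        apply Continuous.mul hk
        exact hu.comp ((continuous_const.sub continuous_id).prodMk continuous_const))
      (Continuous.aestronglyMeasurable (by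
        apply Continuous.mul hk
        exact hut.comp ((continuous_const.sub continuous_id).prodMk continuous_const)))
      (by
        filter_upwards with z hz τ hτ
        rw [Set.uIoc_of_le (le_of_lt hx.1)] at hz
        rw [Metric.mem_ball, Real.dist_eq] at hτ
        have hz1 : z ∈ Set.Icc (0:ℝ) 1 := ⟨le_of_lt hz.1, le_trans hz.2 (le_of_lt hx.2)⟩
        have hxz : x - z ∈ Set.Icc (0:ℝ) 1 := ⟨by linarith [hz.2], by
          have := hz.1; have := hx.2; linarith⟩
        have hτ1 : τ ∈ Set.Icc (s/2) (3*s/2) := by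
          rw [abs_lt] at hτ; constructor <;> linarith
        rw [Real.norm_eq_abs, abs_mul]
        have h1 := hkB z hz1
        have h2 := hM1 (x - z, τ) ⟨hxz, hτ1⟩
        exact mul_le_mul h1 h2 (abs_nonneg _) (le_of_lt hBK))
      intervalIntegrable_const
      (by
        filter_upwards [hae_ne x] with z hzx hz τ hτ
        rw [Set.uIoc_of_le (le_of_lt hx.1)] at hz
        rw [Metric.mem_ball, Real.dist_eq, abs_lt] at hτ
        have hxz : x - z ∈ Set.Ioo (0:ℝ) 1 := by
          constructor
          · have := lt_of_le_of_ne hz.2 hzx; linarith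
          · have := hz.1; have := hx.2; linarith
        exact ((hpde (x - z) hxz τ (by linarith [hτ.1])).1).const_mul (k z))
    exact ((hpde x hx s hs).1).sub hleib.2
  -- spatial derivative of w
  have hwx : ∀ x ∈ Set.Ioo (0:ℝ) 1, ∀ s > (0:ℝ),
      HasDerivAt (fun ξ => w ξ s) (Wx x s) x := by
    intro x hx s hs
    set v : ℝ → ℝ := fun ξ => u ξ s with hvdef
    set d : ℝ → ℝ := fun ξ => ux ξ s with hddef
    have hvc : Continuous v := hu.comp (continuous_id.prodMk continuous_const)
    have hdc : Continuous d := hux.comp (continuous_id.prodMk continuous_const)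
    obtain ⟨M, hM0, hM⟩ : ∃ M : ℝ, 0 ≤ M ∧ ∀ ξ ∈ Set.Icc (0:ℝ) 1, |d ξ| ≤ M := by
      obtain ⟨M, hM⟩ := (isCompact_Icc.image hdc.abs).bddAbove
      exact ⟨max M 0, le_max_right _ _, fun ξ hξ =>
        le_trans (hM (Set.mem_image_of_mem _ hξ)) (le_max_left _ _)⟩
    have hlip : ∀ σ₁ σ₂ : ℝ, |v σ₂ - v σ₁| ≤ M * |σ₂ - σ₁| :=
      lipschitz_clamp v d M hvc hdc (fun ξ hξ => (hpde ξ hξ s hs).2.1) hM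
        (fun ξ hξ => hlo ξ hξ s) (fun ξ hξ => hhi ξ hξ s)
    set G : ℝ → ℝ → ℝ := fun a b => ∫ z in (0:ℝ)..a, k z * v (b - z) with hGdef
    have hGa : ∀ z : ℝ × ℝ, HasDerivAt (fun a => G a z.2) (k z.1 * v (z.2 - z.1)) z.1 := by
      intro z
      exact hasDerivAt_primitive (fun ζ => k ζ * v (z.2 - ζ))
        (hk.mul (hvc.comp (continuous_const.sub continuous_id))) z.1
    have hGb : HasDerivAt (fun b => G x b) (∫ z in (0:ℝ)..x, k z * d (x - z)) x := by
      have hL := intervalIntegral.hasDerivAt_integral_of_dominated_loc_of_lip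
        (F := fun b z => k z * v (b - z)) (F' := fun z => k z * d (x - z))
        (x₀ := x) (a := 0) (b := x) (μ := volume) (bound := fun _ => BK * M)
        (s := Metric.ball x 1) (Metric.ball_mem_nhds _ one_pos)
        (Filter.Eventually.of_forall (fun b => Continuous.aestronglyMeasurable
          (hk.mul (hvc.comp (continuous_const.sub continuous_id)))))
        ((hk.mul (hvc.comp (continuous_const.sub continuous_id))).intervalIntegrable _ _)
        (Continuous.aestronglyMeasurable
          (hk.mul (hdc.comp (continuous_const.sub continuous_id))))
        (by
          filter_upwards with z hz
          rw [Set.uIoc_of_le (le_of_lt hx.1)] at hz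
          have hz1 : z ∈ Set.Icc (0:ℝ) 1 := ⟨le_of_lt hz.1, le_trans hz.2 (le_of_lt hx.2)⟩
          rw [lipschitzOnWith_iff_dist_le_mul]
          intro b₁ _ b₂ _
          rw [Real.dist_eq, Real.dist_eq]
          have h1 : k z * v (b₁ - z) - k z * v (b₂ - z) = k z * (v (b₁ - z) - v (b₂ - z)) := by
            ring
          rw [h1, abs_mul]
          have h2 : |v (b₁ - z) - v (b₂ - z)| ≤ M * |b₁ - b₂| := by
            have := hlip (b₂ - z) (b₁ - z)
            simpa [sub_sub_sub_cancel_right] using this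
          have h3 : ((Real.nnabs (BK * M)) : ℝ) = BK * M := by
            rw [Real.coe_nnabs, abs_of_nonneg (by positivity)]
          rw [h3]
          calc |k z| * |v (b₁ - z) - v (b₂ - z)| ≤ BK * (M * |b₁ - b₂|) := by
                apply mul_le_mul (hkB z hz1) h2 (abs_nonneg _) (le_of_lt hBK)
            _ = BK * M * |b₁ - b₂| := by ring)
        intervalIntegrable_const
        (by
          filter_upwards [hae_ne x] with z hzx hz
          rw [Set.uIoc_of_le (le_of_lt hx.1)] at hz
          have hxz : x - z ∈ Set.Ioo (0:ℝ) 1 := by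
            constructor
            · have := lt_of_le_of_ne hz.2 hzx; linarith
            · have := hz.1; have := hx.2; linarith
          have hd1 : HasDerivAt v (d (x - z)) ((fun b : ℝ => b - z) x) := by
            simpa using (hpde (x - z) hxz s hs).2.1
          have hd2 : HasDerivAt (fun b : ℝ => b - z) 1 x := (hasDerivAt_id x).sub_const z
          have hd3 := HasDerivAt.comp (h := fun b : ℝ => b - z) (h₂ := v) x hd1 hd2
          simpa using hd3.const_mul (k z))
      exact hL.2
    have hGacont : ContinuousAt (fun z : ℝ × ℝ => k z.1 * v (z.2 - z.1)) (x, x) :=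
      ((hk.comp continuous_fst).mul
        (hvc.comp (continuous_snd.sub continuous_fst))).continuousAt
    have hline := hasDerivAt_line G (fun a b => k a * v (b - a)) x x 1 1
      (∫ z in (0:ℝ)..x, k z * d (x - z))
      (Filter.Eventually.of_forall hGa) hGacont hGb
    have hdiag : HasDerivAt (fun ξ => G ξ ξ)
        (k x * v 0 + ∫ z in (0:ℝ)..x, k z * d (x - z)) x := by
      apply hasDerivAt_shift
      have he : (fun σ => (fun ξ => G ξ ξ) (x + σ)) = fun σ => G (x + 1 * σ) (x + 1 * σ) := by
        funext σ; simp
      rw [he]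
      convert hline using 1
      simp
    have hfinal := ((hpde x hx s hs).2.1).sub hdiag
    exact hfinal
  -- cancellation : Wx = Wt on the interior
  have hcancel : ∀ x ∈ Set.Ioo (0:ℝ) 1, ∀ s > (0:ℝ), Wx x s = Wt x s := by
    intro x hx s hs
    have e1 : (∫ z in (0:ℝ)..x, k z * ut (x - z) s)
        = (∫ z in (0:ℝ)..x, k z * ux (x - z) s)
          + (∫ z in (0:ℝ)..x, β (x - z) * k z) * u 0 s := by
      rw [← intervalIntegral.integral_mul_const, ← intervalIntegral.integral_add]
      · apply intervalIntegral.integral_congr_ae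
        filter_upwards [hae_ne x] with z hzx hz
        rw [Set.uIoc_of_le (le_of_lt hx.1)] at hz
        have hxz : x - z ∈ Set.Ioo (0:ℝ) 1 := by
          constructor
          · have := lt_of_le_of_ne hz.2 hzx; linarith
          · have := hz.1; have := hx.2; linarith
        have hpd := (hpde (x - z) hxz s hs).2.2
        rw [hpd]; ring
      · exact (hk.mul (hux.comp ((continuous_const.sub continuous_id).prodMk
          continuous_const))).intervalIntegrable _ _
      · exact (((hβ.comp (continuous_const.sub continuous_id)).mul hk).mul
          continuous_const).intervalIntegrable _ _
    have e2 : β x + k x = ∫ z in (0:ℝ)..x, β (x - z) * k z := by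
      have := hkeq x ⟨le_of_lt hx.1, le_of_lt hx.2⟩
      linarith
    have e3 := (hpde x hx s hs).2.2
    simp only [hWtdef, hWxdef]
    rw [e1, e3, ← e2]
    ring
  -- w is constant along characteristics
  have hchar : ∀ x t S : ℝ, 0 ≤ x → 0 ≤ S → x + S ≤ 1 → S ≤ t →
      w x t = w (x + S) (t - S) := by
    intro x t S hx0 hS0 hxS hSt
    rcases eq_or_lt_of_le hS0 with rfl | hSpos
    · simp
    set h : ℝ → ℝ := fun σ => w (x + σ) (t - σ) with hhdef
    have hhc : Continuous h :=
      hwc.comp ((continuous_const.add continuous_id).prodMk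
        (continuous_const.sub continuous_id))
    have hhd : ∀ σ ∈ Set.Ioo (0:ℝ) S, HasDerivAt h 0 σ := by
      intro σ hσ
      set p := x + σ with hpdef
      set q := t - σ with hqdef
      have hp : p ∈ Set.Ioo (0:ℝ) 1 := ⟨by simp only [hpdef]; linarith [hσ.1],
        by simp only [hpdef]; linarith [hσ.2]⟩
      have hq : q > 0 := by simp only [hqdef]; linarith [hσ.2]
      have hopen : IsOpen (Set.Ioo (0:ℝ) 1 ×ˢ Set.Ioi (0:ℝ)) := isOpen_Ioo.prod isOpen_Ioi
      have hev : ∀ᶠ z : ℝ × ℝ in nhds (p, q),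
          HasDerivAt (fun ξ => w ξ z.2) (Wx z.1 z.2) z.1 := by
        filter_upwards [hopen.eventually_mem (⟨hp, hq⟩ :
          (p, q) ∈ Set.Ioo (0:ℝ) 1 ×ˢ Set.Ioi (0:ℝ))] with z hz
        exact hwx z.1 hz.1 z.2 hz.2
      have hline := hasDerivAt_line w Wx p q 1 (-1) (Wt p q) hev
        hWxc.continuousAt (hwt p hp q hq)
      have hval : 1 * Wx p q + (-1) * Wt p q = 0 := by
        rw [hcancel p hp q hq]; ring
      rw [hval] at hline
      apply hasDerivAt_shift
      have he : (fun σ' => h (σ + σ')) = fun σ' => w (p + 1 * σ') (q + (-1) * σ') := by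
        funext σ'
        simp only [hhdef, hpdef, hqdef]
        congr 1 <;> ring
      rw [he]
      exact hline
    have hmono : MonotoneOn h (Set.Icc 0 S) := by
      apply monotoneOn_of_deriv_nonneg (convex_Icc 0 S) hhc.continuousOn
      · intro σ hσ
        rw [interior_Icc] at hσ
        exact (hhd σ hσ).differentiableAt.differentiableWithinAt
      · intro σ hσ
        rw [interior_Icc] at hσ
        rw [(hhd σ hσ).deriv]
    have hanti : AntitoneOn h (Set.Icc 0 S) := by
      apply antitoneOn_of_deriv_nonpos (convex_Icc 0 S) hhc.continuousOn
      · intro σ hσ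
        rw [interior_Icc] at hσ
        exact (hhd σ hσ).differentiableAt.differentiableWithinAt
      · intro σ hσ
        rw [interior_Icc] at hσ
        rw [(hhd σ hσ).deriv]
    have h0S : h 0 = h S := by
      apply le_antisymm
      · exact hmono (Set.left_mem_Icc.mpr hS0) ⟨hS0, le_refl S⟩ hS0
      · exact hanti (Set.left_mem_Icc.mpr hS0) ⟨hS0, le_refl S⟩ hS0
    have : h 0 = w x t := by simp [hhdef]
    rw [← this, h0S]
  -- boundary bound
  have hbdry : ∀ s ≥ (0:ℝ), |w 1 s| ≤ ε := by
    intro s hs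
    have e1 : (∫ z in (0:ℝ)..1, k z * u (1 - z) s) = ∫ y in (0:ℝ)..1, k (1 - y) * u y s := by
      have h2 := intervalIntegral.integral_comp_sub_left (a := (0:ℝ)) (b := 1)
        (fun y => k (1 - y) * u y s) 1
      simp only [sub_zero, sub_self] at h2
      rw [← h2]
      apply intervalIntegral.integral_congr
      intro z _
      dsimp only
      congr 2
      ring
    have : w 1 s = u 1 s - ∫ y in (0:ℝ)..1, k (1 - y) * u y s := by
      simp only [hwdef]; rw [e1]
    rw [this]
    exact hbd s hs
  have hwsmall : ∀ x ∈ Set.Icc (0:ℝ) 1, ∀ s, 1 - x ≤ s → |w x s| ≤ ε := by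
    intro x hx s hxs
    have := hchar x s (1 - x) hx.1 (by linarith [hx.2]) (by linarith) hxs
    rw [this]
    have e : x + (1 - x) = 1 := by ring
    rw [e]
    exact hbdry (s - (1 - x)) (by linarith)
  -- ====================== L² estimates ======================
  intro t ht
  have hwslice : ∀ s : ℝ, Continuous (fun x => w x s) := fun s =>
    hwc.comp (continuous_id.prodMk continuous_const)
  have huslice : ∀ s : ℝ, Continuous (fun x => u x s) := fun s =>
    hu.comp (continuous_id.prodMk continuous_const)
  have tail_bound : ∀ f : ℝ → ℝ, Continuous f → ∀ x ∈ Set.Icc (0:ℝ) 1,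
      (∫ z in (0:ℝ)..x, |f z|) ≤ l2Norm f := by
    intro f hf x hx
    have h1 : (∫ z in (0:ℝ)..x, |f z|) + (∫ z in x..1, |f z|) = ∫ z in (0:ℝ)..1, |f z| :=
      intervalIntegral.integral_add_adjacent_intervals
        (hf.abs.intervalIntegrable _ _) (hf.abs.intervalIntegrable _ _)
    have h2 : 0 ≤ ∫ z in x..1, |f z| :=
      intervalIntegral.integral_nonneg hx.2 (fun z _ => abs_nonneg _)
    have h3 := abs_integral_le_l2 f hf
    linarith
  -- ‖w(·,0)‖ ≤ (1 + BK) ‖u(·,0)‖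
  set N0 := l2Norm (fun x => u x 0) with hN0def
  have hN0 : 0 ≤ N0 := l2Norm_nonneg _
  have est1 : l2Norm (fun x => w x 0) ≤ (1 + BK) * N0 := by
    have hpt : ∀ x ∈ Set.Icc (0:ℝ) 1, |w x 0| ≤ |u x 0| + BK * N0 := by
      intro x hx
      have h1 : |∫ z in (0:ℝ)..x, k z * u (x - z) 0| ≤ ∫ z in (0:ℝ)..x, BK * |u (x - z) 0| := by
        apply le_trans (intervalIntegral.abs_integral_le_integral_abs hx.1)
        apply intervalIntegral.integral_mono_on hx.1
        · exact (hk.mul (huslice 0 |>.comp (continuous_const.sub continuous_id))).abs.intervalIntegrable _ _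
        · exact (continuous_const.mul ((huslice 0).comp
            (continuous_const.sub continuous_id)).abs).intervalIntegrable _ _
        · intro z hz
          rw [abs_mul]
          exact mul_le_mul (hkB z ⟨hz.1, le_trans hz.2 hx.2⟩) (le_refl _)
            (abs_nonneg _) (le_of_lt hBK)
      have h2 : (∫ z in (0:ℝ)..x, BK * |u (x - z) 0|) = BK * ∫ z in (0:ℝ)..x, |u (x - z) 0| :=
        intervalIntegral.integral_const_mul _ _
      have h3 : (∫ z in (0:ℝ)..x, |u (x - z) 0|) = ∫ y in (0:ℝ)..x, |u y 0| := by
        have h4 := intervalIntegral.integral_comp_sub_left (a := (0:ℝ)) (b := x)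
          (fun y => |u y 0|) x
        simp only [sub_zero, sub_self] at h4
        exact h4
      have h5 := tail_bound (fun y => |u y 0|) (huslice 0).abs x hx
      have h6 : (∫ y in (0:ℝ)..x, |(fun y => |u y 0|) y|) = ∫ y in (0:ℝ)..x, |u y 0| := by
        apply intervalIntegral.integral_congr
        intro y _
        exact abs_abs _
      have h7 : l2Norm (fun y => |u y 0|) = N0 := by
        rw [hN0def]
        unfold l2Norm
        congr 1
        apply intervalIntegral.integral_congr
        intro y _
        exact sq_abs _
      rw [h6, h7] at h5
      have h8 : |w x 0| ≤ |u x 0| + |∫ z in (0:ℝ)..x, k z * u (x - z) 0| := by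
        simp only [hwdef]
        exact abs_sub _ _
      calc |w x 0| ≤ |u x 0| + |∫ z in (0:ℝ)..x, k z * u (x - z) 0| := h8
        _ ≤ |u x 0| + BK * N0 := by
            rw [h2, h3] at h1
            have : BK * (∫ y in (0:ℝ)..x, |u y 0|) ≤ BK * N0 :=
              mul_le_mul_of_nonneg_left h5 (le_of_lt hBK)
            linarith
    have := l2Norm_le_of_pointwise (fun x => u x 0) (fun x => w x 0) (BK * N0)
      (huslice 0) (hwslice 0) (by positivity) hpt
    rw [hN0def] at this ⊢
    linarith [this]
  -- ‖u(·,t)‖ ≤ (1 + Bβ) ‖w(·,t)‖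
  set Wn := l2Norm (fun x => w x t) with hWndef
  have hWn0 : 0 ≤ Wn := l2Norm_nonneg _
  have est2 : l2Norm (fun x => u x t) ≤ (1 + Bβ) * Wn := by
    have hinv := inverse_transform β k (fun ξ => u ξ t) hβ hk (huslice t) hkeq
    have hpt : ∀ x ∈ Set.Icc (0:ℝ) 1, |u x t| ≤ |w x t| + Bβ * Wn := by
      intro x hx
      have hid := hinv x hx
      have hwid : u x t = w x t - ∫ y in (0:ℝ)..x, β (x - y) * w y t := by
        rw [← hid]
      have h1 : |∫ y in (0:ℝ)..x, β (x - y) * w y t| ≤ ∫ y in (0:ℝ)..x, Bβ * |w y t| := by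
        apply le_trans (intervalIntegral.abs_integral_le_integral_abs hx.1)
        apply intervalIntegral.integral_mono_on hx.1
        · exact ((hβ.comp (continuous_const.sub continuous_id)).mul
            (hwslice t)).abs.intervalIntegrable _ _
        · exact (continuous_const.mul (hwslice t).abs).intervalIntegrable _ _
        · intro y hy
          rw [abs_mul]
          exact mul_le_mul (hβB _) (le_refl _) (abs_nonneg _) (le_of_lt hBβ)
      have h2 : (∫ y in (0:ℝ)..x, Bβ * |w y t|) = Bβ * ∫ y in (0:ℝ)..x, |w y t| :=
        intervalIntegral.integral_const_mul _ _
      have h5 := tail_bound (fun y => |w y t|) (hwslice t).abs x hx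
      have h6 : (∫ y in (0:ℝ)..x, |(fun y => |w y t|) y|) = ∫ y in (0:ℝ)..x, |w y t| := by
        apply intervalIntegral.integral_congr
        intro y _
        exact abs_abs _
      have h7 : l2Norm (fun y => |w y t|) = Wn := by
        rw [hWndef]
        unfold l2Norm
        congr 1
        apply intervalIntegral.integral_congr
        intro y _
        exact sq_abs _
      rw [h6, h7] at h5
      rw [hwid]
      calc |w x t - ∫ y in (0:ℝ)..x, β (x - y) * w y t|
          ≤ |w x t| + |∫ y in (0:ℝ)..x, β (x - y) * w y t| := abs_sub _ _
        _ ≤ |w x t| + Bβ * Wn := by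
            rw [h2] at h1
            have : Bβ * (∫ y in (0:ℝ)..x, |w y t|) ≤ Bβ * Wn :=
              mul_le_mul_of_nonneg_left h5 (le_of_lt hBβ)
            linarith
    have := l2Norm_le_of_pointwise (fun x => w x t) (fun x => u x t) (Bβ * Wn)
      (hwslice t) (huslice t) (by positivity) hpt
    rw [hWndef] at this ⊢
    linarith [this]
  -- decay estimate for ‖w(·,t)‖
  set W0 := l2Norm (fun x => w x 0) with hW0def
  have hW00 : 0 ≤ W0 := l2Norm_nonneg _
  have hsqrtc : Real.sqrt c ≤ Real.exp (c / 2) := by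
    have h1 : c ≤ Real.exp c := by linarith [Real.add_one_le_exp c]
    have h2 : Real.exp c = Real.exp (c / 2) ^ 2 := by
      rw [sq, ← Real.exp_add]; ring_nf
    calc Real.sqrt c ≤ Real.sqrt (Real.exp c) := Real.sqrt_le_sqrt h1
      _ = Real.exp (c / 2) := by rw [h2, Real.sqrt_sq (Real.exp_pos _).le]
  have hone_le : 1 ≤ Real.exp (c / 2) / Real.sqrt c := by
    rw [le_div_iff₀ (Real.sqrt_pos.mpr hc)]
    linarith
  have hWdecay : Wn ≤ Real.exp (c / 2) * Real.exp (-c * t / 2) * W0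
      + (Real.exp (c / 2) / Real.sqrt c) * ε := by
    rcases le_or_gt 1 t with h1t | h1t
    · -- t ≥ 1 : |w x t| ≤ ε everywhere
      have hWε : Wn ≤ ε := by
        have hz : l2Norm (fun _ : ℝ => (0:ℝ)) = 0 := by
          unfold l2Norm
          simp
        have := l2Norm_le_of_pointwise (fun _ : ℝ => (0:ℝ)) (fun x => w x t) ε
          continuous_const (hwslice t) hε.le (fun x hx => by
            simp only [abs_zero, zero_add]
            exact hwsmall x hx t (by linarith [hx.1]))
        rw [hz, zero_add] at this
        exact this
      have h2 : ε ≤ (Real.exp (c / 2) / Real.sqrt c) * ε := by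
        nlinarith
      have h3 : 0 ≤ Real.exp (c / 2) * Real.exp (-c * t / 2) * W0 := by positivity
      linarith
    · -- t < 1
      have key : (∫ x in (0:ℝ)..1, w x t ^ 2) ≤ (∫ x in (0:ℝ)..1, w x 0 ^ 2) + ε ^ 2 := by
        have hsplit : (∫ x in (0:ℝ)..(1 - t), w x t ^ 2) + (∫ x in (1 - t)..1, w x t ^ 2)
            = ∫ x in (0:ℝ)..1, w x t ^ 2 :=
          intervalIntegral.integral_add_adjacent_intervals
            (((hwslice t).pow 2).intervalIntegrable _ _)
            (((hwslice t).pow 2).intervalIntegrable _ _)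
        have hp1 : (∫ x in (0:ℝ)..(1 - t), w x t ^ 2)
            = ∫ x in (0:ℝ)..(1 - t), w (x + t) 0 ^ 2 := by
          apply intervalIntegral.integral_congr
          intro x hx
          rw [Set.uIcc_of_le (by linarith : (0:ℝ) ≤ 1 - t)] at hx
          dsimp only
          have := hchar x t t hx.1 ht (by linarith [hx.2]) (le_refl t)
          rw [this]
          congr 2
          ring
        have hp1b : (∫ x in (0:ℝ)..(1 - t), w (x + t) 0 ^ 2) = ∫ y in t..1, w y 0 ^ 2 := by
          have h4 := intervalIntegral.integral_comp_add_right (a := (0:ℝ)) (b := 1 - t)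
            (fun y => w y 0 ^ 2) t
          rw [show (0:ℝ) + t = t by ring, show 1 - t + t = (1:ℝ) by ring] at h4
          exact h4
        have hp1c : (∫ y in t..1, w y 0 ^ 2) ≤ ∫ y in (0:ℝ)..1, w y 0 ^ 2 := by
          have h5 : (∫ y in (0:ℝ)..t, w y 0 ^ 2) + (∫ y in t..1, w y 0 ^ 2)
              = ∫ y in (0:ℝ)..1, w y 0 ^ 2 :=
            intervalIntegral.integral_add_adjacent_intervals
              (((hwslice 0).pow 2).intervalIntegrable _ _)
              (((hwslice 0).pow 2).intervalIntegrable _ _)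
          have h6 : 0 ≤ ∫ y in (0:ℝ)..t, w y 0 ^ 2 :=
            intervalIntegral.integral_nonneg ht (fun y _ => sq_nonneg _)
          linarith
        have hp2 : (∫ x in (1 - t)..1, w x t ^ 2) ≤ t * ε ^ 2 := by
          have h7 : (∫ x in (1 - t)..1, w x t ^ 2) ≤ ∫ x in (1 - t)..1, ε ^ 2 := by
            apply intervalIntegral.integral_mono_on (by linarith)
              (((hwslice t).pow 2).intervalIntegrable _ _) intervalIntegrable_const
            intro x hx
            have h8 := hwsmall x ⟨by linarith [hx.1], hx.2⟩ t (by linarith [hx.1])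
            calc w x t ^ 2 = |w x t| ^ 2 := (sq_abs _).symm
              _ ≤ ε ^ 2 := pow_le_pow_left₀ (abs_nonneg _) h8 2
          have h9 : (∫ x in (1 - t)..1, (ε:ℝ) ^ 2) = t * ε ^ 2 := by
            rw [intervalIntegral.integral_const]
            simp only [smul_eq_mul]
            ring
          linarith
        have h10 : t * ε ^ 2 ≤ ε ^ 2 := by nlinarith
        linarith
      have hWle : Wn ≤ W0 + ε := by
        rw [hWndef, hW0def]
        unfold l2Norm
        calc Real.sqrt (∫ x in (0:ℝ)..1, w x t ^ 2)
            ≤ Real.sqrt ((∫ x in (0:ℝ)..1, w x 0 ^ 2) + ε ^ 2) := Real.sqrt_le_sqrt key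
          _ ≤ Real.sqrt (∫ x in (0:ℝ)..1, w x 0 ^ 2) + Real.sqrt (ε ^ 2) :=
              sqrt_add_le _ _ (intervalIntegral.integral_nonneg (by norm_num)
                (fun x _ => sq_nonneg _)) (sq_nonneg _)
          _ = Real.sqrt (∫ x in (0:ℝ)..1, w x 0 ^ 2) + ε := by
              rw [Real.sqrt_sq hε.le]
      have hE1 : 1 ≤ Real.exp (c / 2) * Real.exp (-c * t / 2) := by
        rw [← Real.exp_add]
        apply Real.one_le_exp
        nlinarith
      have h11 : W0 ≤ Real.exp (c / 2) * Real.exp (-c * t / 2) * W0 := by nlinarith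
      have h12 : ε ≤ (Real.exp (c / 2) / Real.sqrt c) * ε := by nlinarith
      linarith
  -- final assembly
  calc l2Norm (fun x => u x t) ≤ (1 + Bβ) * Wn := est2
    _ ≤ (1 + Bβ) * (Real.exp (c / 2) * Real.exp (-c * t / 2) * W0
        + (Real.exp (c / 2) / Real.sqrt c) * ε) := by
        apply mul_le_mul_of_nonneg_left hWdecay (by linarith)
    _ ≤ (1 + Bβ) * (Real.exp (c / 2) * Real.exp (-c * t / 2) * ((1 + BK) * N0)
        + (Real.exp (c / 2) / Real.sqrt c) * ε) := by
        apply mul_le_mul_of_nonneg_left _ (by linarith)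
        have : Real.exp (c / 2) * Real.exp (-c * t / 2) * W0
            ≤ Real.exp (c / 2) * Real.exp (-c * t / 2) * ((1 + BK) * N0) :=
          mul_le_mul_of_nonneg_left est1 (by positivity)
        linarith
    _ = (1 + Bβ) * (1 + Bβ * Real.exp Bβ) * Real.exp (c / 2) * Real.exp (-c * t / 2) *
            l2Norm (fun x => u x 0) +
          (1 + Bβ) * (Real.exp (c / 2) / Real.sqrt c) * ε := by
        rw [hBKdef, hN0def]
        ring

set_option maxHeartbeats 1000000 in
/-- semiglobal practical exponential stability under approximate feedback:
if the input U satisfies |U(t) − ∫₀¹ k(1−y) u(y,t) dy| ≤ ε, then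
‖u(·,t)‖ ≤ (1 + B_β)(1 + B_β e^{B_β}) e^{c/2} e^{−ct/2} ‖u(·,0)‖
           + (1 + B_β)(e^{c/2}/√c) ε. -/
theorem semiglobal_practical_stability (Bβ c ε : ℝ) (hBβ : 0 < Bβ) (hc : 0 < c)
    (hε : 0 < ε)
    (β k : ℝ → ℝ)
    (hβ : ContinuousOn β (Set.Icc 0 1))
    (hβB : supNorm β ≤ Bβ)
    (hk : ContinuousOn k (Set.Icc 0 1))
    (hkeq : ∀ x ∈ Set.Icc (0:ℝ) 1,
      k x = -β x + ∫ y in (0:ℝ)..x, β (x - y) * k y)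
    (u ut ux : ℝ → ℝ → ℝ) (U : ℝ → ℝ)
    (hu : ContinuousOn (fun p : ℝ × ℝ => u p.1 p.2) (Set.Icc 0 1 ×ˢ Set.Ici 0))
    (hut : ContinuousOn (fun p : ℝ × ℝ => ut p.1 p.2) (Set.Icc 0 1 ×ˢ Set.Ici 0))
    (hux : ContinuousOn (fun p : ℝ × ℝ => ux p.1 p.2) (Set.Icc 0 1 ×ˢ Set.Ici 0))
    (hpde : ∀ x ∈ Set.Ioo (0:ℝ) 1, ∀ t > (0:ℝ),
      HasDerivAt (fun τ => u x τ) (ut x t) t ∧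
      HasDerivAt (fun ξ => u ξ t) (ux x t) x ∧
      ut x t = ux x t + β x * u 0 t)
    (hbc : ∀ t ≥ (0:ℝ), u 1 t = U t)
    (hU : ∀ t ≥ (0:ℝ), |U t - ∫ y in (0:ℝ)..1, k (1 - y) * u y t| ≤ ε) :
    ∀ t ≥ (0:ℝ),
      l2Norm (fun x => u x t) ≤
        (1 + Bβ) * (1 + Bβ * Real.exp Bβ) * Real.exp (c / 2) * Real.exp (-c * t / 2) *
            l2Norm (fun x => u x 0) +
          (1 + Bβ) * (Real.exp (c / 2) / Real.sqrt c) * ε := by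
  -- clamping maps
  set cx : ℝ → ℝ := fun x => max 0 (min 1 x) with hcx
  set cs : ℝ → ℝ := fun s => max 0 s with hcs
  have hcxc : Continuous cx := continuous_const.max (continuous_const.min continuous_id)
  have hcsc : Continuous cs := continuous_const.max continuous_id
  have hcxmem : ∀ x, cx x ∈ Set.Icc (0:ℝ) 1 :=
    fun x => ⟨le_max_left _ _, max_le (by norm_num) (min_le_left _ _)⟩
  have hcsmem : ∀ s, cs s ∈ Set.Ici (0:ℝ) := fun s => by simp only [hcs, Set.mem_Ici]; exact le_max_left _ _
  have hcxid : ∀ x ∈ Set.Icc (0:ℝ) 1, cx x = x := by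
    intro x hx
    simp only [hcx]
    rw [min_eq_right hx.2, max_eq_right hx.1]
  have hcsid : ∀ s : ℝ, 0 ≤ s → cs s = s := fun s hs => max_eq_right hs
  -- clamped data
  set β' : ℝ → ℝ := fun x => β (cx x) with hβ'
  set k' : ℝ → ℝ := fun x => k (cx x) with hk'
  set u' : ℝ → ℝ → ℝ := fun x s => u (cx x) (cs s) with hu'
  set ut' : ℝ → ℝ → ℝ := fun x s => ut (cx x) (cs s) with hut'
  set ux' : ℝ → ℝ → ℝ := fun x s => ux (cx x) (cs s) with hux'
  -- continuity of clamped data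
  have hβ'c : Continuous β' := hβ.comp_continuous hcxc hcxmem
  have hk'c : Continuous k' := hk.comp_continuous hcxc hcxmem
  have hprodmem : ∀ p : ℝ × ℝ, (cx p.1, cs p.2) ∈ Set.Icc (0:ℝ) 1 ×ˢ Set.Ici (0:ℝ) :=
    fun p => ⟨hcxmem p.1, hcsmem p.2⟩
  have hprodc : Continuous (fun p : ℝ × ℝ => (cx p.1, cs p.2)) :=
    (hcxc.comp continuous_fst).prodMk (hcsc.comp continuous_snd)
  have hu'c : Continuous (fun p : ℝ × ℝ => u' p.1 p.2) := hu.comp_continuous hprodc hprodmem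
  have hut'c : Continuous (fun p : ℝ × ℝ => ut' p.1 p.2) := hut.comp_continuous hprodc hprodmem
  have hux'c : Continuous (fun p : ℝ × ℝ => ux' p.1 p.2) := hux.comp_continuous hprodc hprodmem
  -- sup bound for β
  have hβB' : ∀ x, |β' x| ≤ Bβ := by
    intro x
    have h1 : BddAbove ((fun x => |β x|) '' Set.Icc 0 1) :=
      (isCompact_Icc.image_of_continuousOn hβ.abs).bddAbove
    exact le_trans (le_csSup h1 (Set.mem_image_of_mem _ (hcxmem x))) hβB
  -- kernel equation for clamped data
  have hkeq' : ∀ x ∈ Set.Icc (0:ℝ) 1, k' x = -β' x + ∫ y in (0:ℝ)..x, β' (x - y) * k' y := by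
    intro x hx
    have e1 : k' x = k x := by simp only [hk', hcxid x hx]
    have e2 : β' x = β x := by simp only [hβ', hcxid x hx]
    have e3 : (∫ y in (0:ℝ)..x, β' (x - y) * k' y) = ∫ y in (0:ℝ)..x, β (x - y) * k y := by
      apply intervalIntegral.integral_congr
      intro y hy
      rw [Set.uIcc_of_le hx.1] at hy
      have hy1 : y ∈ Set.Icc (0:ℝ) 1 := ⟨hy.1, le_trans hy.2 hx.2⟩
      have hy2 : x - y ∈ Set.Icc (0:ℝ) 1 := ⟨by linarith [hy.2], by linarith [hy.1, hx.2]⟩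
      simp only [hβ', hk', hcxid _ hy1, hcxid _ hy2]
    rw [e1, e2, e3]
    exact hkeq x hx
  -- PDE for clamped data
  have hpde' : ∀ x ∈ Set.Ioo (0:ℝ) 1, ∀ s > (0:ℝ),
      HasDerivAt (fun τ => u' x τ) (ut' x s) s ∧
      HasDerivAt (fun ξ => u' ξ s) (ux' x s) x ∧
      ut' x s = ux' x s + β' x * u' 0 s := by
    intro x hx s hs
    have hxI : x ∈ Set.Icc (0:ℝ) 1 := ⟨le_of_lt hx.1, le_of_lt hx.2⟩
    have h0I : (0:ℝ) ∈ Set.Icc (0:ℝ) 1 := by norm_num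
    obtain ⟨hd1, hd2, hd3⟩ := hpde x hx s hs
    refine ⟨?_, ?_, ?_⟩
    · have hv : ut' x s = ut x s := by
        simp only [hut', hcxid x hxI, hcsid s (le_of_lt hs)]
      rw [hv]
      apply hd1.congr_of_eventuallyEq
      filter_upwards [Ioi_mem_nhds hs] with τ hτ
      simp only [hu', hcxid x hxI, hcsid τ (le_of_lt hτ)]
    · have : ux' x s = ux x s := by simp only [hux', hcxid x hxI, hcsid s (le_of_lt hs)]
      rw [this]
      apply hd2.congr_of_eventuallyEq
      filter_upwards [Ioo_mem_nhds hx.1 hx.2] with ξ hξ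
      simp only [hu', hcxid ξ ⟨le_of_lt hξ.1, le_of_lt hξ.2⟩, hcsid s (le_of_lt hs)]
    · simp only [hu', hut', hux', hβ', hcxid x hxI, hcsid s (le_of_lt hs), hcxid 0 h0I]
      exact hd3
  -- clamping identities
  have hlo' : ∀ x ≤ (0:ℝ), ∀ s, u' x s = u' 0 s := by
    intro x hxle s
    have : cx x = 0 := by
      simp only [hcx]
      rw [max_eq_left (le_trans (min_le_right _ _) hxle)]
    simp only [hu', this, hcxid 0 (by norm_num : (0:ℝ) ∈ Set.Icc (0:ℝ) 1)]
  have hhi' : ∀ x ≥ (1:ℝ), ∀ s, u' x s = u' 1 s := by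
    intro x hxge s
    have : cx x = 1 := by
      simp only [hcx]
      rw [min_eq_left hxge, max_eq_right (by norm_num : (0:ℝ) ≤ 1)]
    simp only [hu', this, hcxid 1 (by norm_num : (1:ℝ) ∈ Set.Icc (0:ℝ) 1)]
  -- boundary bound for clamped data
  have hbd' : ∀ s ≥ (0:ℝ), |u' 1 s - ∫ y in (0:ℝ)..1, k' (1 - y) * u' y s| ≤ ε := by
    intro s hs
    have e1 : u' 1 s = U s := by
      simp only [hu', hcxid 1 (by norm_num : (1:ℝ) ∈ Set.Icc (0:ℝ) 1), hcsid s hs]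
      exact hbc s hs
    have e2 : (∫ y in (0:ℝ)..1, k' (1 - y) * u' y s) = ∫ y in (0:ℝ)..1, k (1 - y) * u y s := by
      apply intervalIntegral.integral_congr
      intro y hy
      rw [Set.uIcc_of_le (by norm_num : (0:ℝ) ≤ 1)] at hy
      have hy2 : 1 - y ∈ Set.Icc (0:ℝ) 1 := ⟨by linarith [hy.2], by linarith [hy.1]⟩
      simp only [hk', hu', hcxid _ hy2, hcxid _ hy, hcsid s hs]
    rw [e1, e2]
    exact hU s hs
  -- apply the core estimate
  intro t ht
  have hcore := core Bβ c ε hBβ hc hε β' k' u' ut' ux' hβ'c hk'c hu'c hut'c hux'c hβB'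
    hkeq' hpde' hlo' hhi' hbd' t ht
  have etrans : ∀ s : ℝ, 0 ≤ s → l2Norm (fun x => u x s) = l2Norm (fun x => u' x s) := by
    intro s hs
    unfold l2Norm
    congr 1
    apply intervalIntegral.integral_congr
    intro x hx
    rw [Set.uIcc_of_le (by norm_num : (0:ℝ) ≤ 1)] at hx
    simp only [hu', hcxid x hx, hcsid s hs]
  rw [etrans t ht, etrans 0 (le_refl 0)]
  exact hcore
end
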